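/- arXiv:2207.09757 — 8 statements merged into one kernel-verified Lean document; each statement's English description precedes it below -/
import Mathlib

section
/- Let $i$ be a positive integer and $\gamma' \geq 0$ a real number. Then $\kappa(i,\gamma') = \dfrac{(2i)!}{i!}\,\dfrac{\Gamma(\gamma'+1)}{\Gamma(i+\gamma'+1)}$, and in particular $\kappa(i,\gamma') > 0$. -/
open Finset

/-- The coefficient `a_{ij}(γ') = ((j+1)(j+1-γ')) / ((i-j)(i-j+γ'))`. -/
noncomputable def aCoef (i j : ℕ) (γ : ℝ) : ℝ :=
  (((j : ℝ) + 1) * ((j : ℝ) + 1 - γ)) / (((i : ℝ) - (j : ℝ)) * ((i : ℝ) - (j : ℝ) + γ))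


noncomputable def QP (γ : ℝ) (n : ℕ) : ℝ := ∏ t ∈ Finset.range n, (γ + 1 + t)

lemma QP_pos {γ : ℝ} (hγ : 0 ≤ γ) (n : ℕ) : 0 < QP γ n := by
  apply Finset.prod_pos
  intro t _
  positivity

lemma Gamma_QP {γ : ℝ} (hγ : 0 ≤ γ) (n : ℕ) :
    Real.Gamma (γ + 1 + n) = Real.Gamma (γ + 1) * QP γ n := by
  induction n with
  | zero => simp [QP]
  | succ n ih =>
    have h1 : γ + 1 + (n + 1 : ℕ) = (γ + 1 + n) + 1 := by push_cast; ring
    have h2 : (0:ℝ) < γ + 1 + n := by positivity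
    rw [h1, Real.Gamma_add_one (ne_of_gt h2), ih, QP, QP, Finset.prod_range_succ]
    ring

noncomputable def fallP (x : ℝ) (n : ℕ) : ℝ := ∏ t ∈ Finset.range n, (x - t)

lemma fallP_succ (x : ℝ) (n : ℕ) : fallP x (n+1) = fallP x n * (x - n) :=
  Finset.prod_range_succ _ _

lemma fallP_mul_factorial : ∀ {n m : ℕ}, n ≤ m →
    fallP (m : ℝ) n * ((m - n).factorial : ℝ) = (m.factorial : ℝ) := by
  intro n
  induction n with
  | zero => intro m h; simp [fallP]
  | succ n ih =>
    intro m h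
    have hn : n ≤ m := le_of_lt h
    have h1 : m - n = (m - (n+1)) + 1 := by omega
    have hc : ((m:ℝ) - n) = ((m - n : ℕ) : ℝ) := by
      rw [Nat.cast_sub hn]
    have := ih hn
    rw [h1, Nat.factorial_succ] at this
    rw [fallP_succ, hc, h1]
    push_cast at this ⊢
    nlinarith [this]


lemma vdm (n : ℕ) (x y : ℝ) :
    ∑ j ∈ range (n+1), (n.choose j : ℝ) * fallP x j * fallP y (n-j) = fallP (x+y) n := by
  induction n with
  | zero => simp [fallP]
  | succ n ih =>
    rw [fallP_succ, ← ih, Finset.sum_mul]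
    have key : ∀ j ∈ range (n+1), (n.choose j : ℝ) * fallP x j * fallP y (n-j) * (x + y - n)
        = (n.choose j : ℝ) * fallP x (j+1) * fallP y (n-j)
          + (n.choose j : ℝ) * fallP x j * fallP y (n-j+1) := by
      intro j hj
      have hj' : j ≤ n := Nat.lt_succ_iff.mp (Finset.mem_range.mp hj)
      have hc : ((n - j : ℕ) : ℝ) = (n : ℝ) - j := by
        push_cast [hj']; ring
      rw [fallP_succ, fallP_succ, hc]; ring
    rw [Finset.sum_congr rfl key, Finset.sum_add_distrib]
    have hA : ∑ j ∈ range (n+1+1), ((n+1).choose j : ℝ) * fallP x j * fallP y (n+1-j)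
        = ∑ j ∈ range (n+1), ((n+1).choose (j+1) : ℝ) * fallP x (j+1) * fallP y (n-j)
          + fallP y (n+1) := by
      rw [Finset.sum_range_succ']
      simp [fallP, Nat.succ_sub_succ]
    have hB : ∑ j ∈ range (n+1), ((n:ℝ) - (n:ℝ)) = 0 := by simp
    rw [hA]
    have hsplit : ∀ j ∈ range (n+1), ((n+1).choose (j+1) : ℝ) * fallP x (j+1) * fallP y (n-j)
        = (n.choose j : ℝ) * fallP x (j+1) * fallP y (n-j)
          + (n.choose (j+1) : ℝ) * fallP x (j+1) * fallP y (n-j) := by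
      intro j hj
      rw [Nat.choose_succ_succ]
      push_cast
      ring
    rw [Finset.sum_congr rfl hsplit, Finset.sum_add_distrib]
    have hC : ∑ j ∈ range (n+1), (n.choose j : ℝ) * fallP x j * fallP y (n-j+1)
        = ∑ j ∈ range (n+1), (n.choose (j+1) : ℝ) * fallP x (j+1) * fallP y (n-j)
          + fallP y (n+1) := by
      have he : ∀ j ∈ range (n+1), (n.choose j : ℝ) * fallP x j * fallP y (n-j+1)
          = (n.choose j : ℝ) * fallP x j * fallP y (n+1-j) := by
        intro j hj
        have hj' : j ≤ n := Nat.lt_succ_iff.mp (Finset.mem_range.mp hj)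
        rw [Nat.succ_sub hj']
      rw [Finset.sum_congr rfl he]
      have h2 : ∑ j ∈ range (n+1+1), (n.choose j : ℝ) * fallP x j * fallP y (n+1-j)
          = ∑ j ∈ range (n+1), (n.choose j : ℝ) * fallP x j * fallP y (n+1-j) := by
        rw [Finset.sum_range_succ]
        simp
      rw [← h2, Finset.sum_range_succ']
      simp [fallP, Nat.succ_sub_succ]
    rw [hC]
    ring

lemma QP_eq_fallP (γ : ℝ) (n : ℕ) : QP γ n = fallP ((n:ℝ)+γ) n := by
  rw [QP, fallP, ← Finset.prod_range_reflect (fun t => ((n:ℝ)+γ) - t) n]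
  apply Finset.prod_congr rfl
  intro t ht
  have ht' : n - 1 - t + (t + 1) = n := by
    have := Finset.mem_range.mp ht; omega
  have hc : ((n - 1 - t : ℕ) : ℝ) = (n:ℝ) - 1 - t := by
    have := congrArg (fun k : ℕ => (k : ℝ)) ht'
    push_cast at this
    linarith
  simp only [hc]
  ring


lemma prod_aCoef {i j : ℕ} (hj : j < i) {γ : ℝ} (hγ : 0 ≤ γ) :
    (∏ k ∈ Finset.Icc j (i-1), aCoef i k γ) * QP γ i
      = (i.choose j : ℝ) * fallP ((i:ℝ)+γ) j * fallP ((i:ℝ)-γ) (i-j) := by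
  set m := i - j with hm
  have him : i = j + m := by omega
  have hm1 : 1 ≤ m := by omega
  have hIcc : Finset.Icc j (i-1) = Finset.Ico j i := by
    rw [← Finset.Ico_add_one_right_eq_Icc]
    congr 1
    omega
  have hreindex : ∏ k ∈ Finset.Icc j (i-1), aCoef i k γ
      = ∏ t ∈ Finset.range m, aCoef i (j+t) γ := by
    rw [hIcc, Finset.prod_Ico_eq_prod_range]
  have hsplit : ∏ t ∈ Finset.range m, aCoef i (j+t) γ
      = ((∏ t ∈ Finset.range m, ((j:ℝ)+t+1)) * (∏ t ∈ Finset.range m, ((j:ℝ)+t+1-γ)))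
        / ((∏ t ∈ Finset.range m, ((m:ℝ)-t)) * (∏ t ∈ Finset.range m, ((m:ℝ)-t+γ))) := by
    rw [← Finset.prod_mul_distrib, ← Finset.prod_mul_distrib, ← Finset.prod_div_distrib]
    apply Finset.prod_congr rfl
    intro t ht
    unfold aCoef
    have : ((j+t : ℕ):ℝ) = (j:ℝ) + t := by push_cast; ring
    rw [this]
    have : (i:ℝ) = (j:ℝ) + m := by rw [him]; push_cast; ring
    rw [this]
    ring_nf
  -- evaluate the four products
  have hcast : ∀ t ∈ Finset.range m, ((m - 1 - t : ℕ) : ℝ) = (m:ℝ) - 1 - t := by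
    intro t ht
    have ht' : m - 1 - t + (t + 1) = m := by
      have := Finset.mem_range.mp ht; omega
    have := congrArg (fun k : ℕ => (k : ℝ)) ht'
    push_cast at this
    linarith
  have hN1 : ∏ t ∈ Finset.range m, ((j:ℝ)+t+1) = fallP (i:ℝ) m := by
    rw [fallP, ← Finset.prod_range_reflect (fun t => (i:ℝ) - t) m]
    apply Finset.prod_congr rfl
    intro t ht
    rw [hcast t ht, him]
    push_cast
    ring
  have hN2 : ∏ t ∈ Finset.range m, ((j:ℝ)+t+1-γ) = fallP ((i:ℝ)-γ) m := by
    rw [fallP, ← Finset.prod_range_reflect (fun t => ((i:ℝ)-γ) - t) m]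
    apply Finset.prod_congr rfl
    intro t ht
    rw [hcast t ht, him]
    push_cast
    ring
  have hD1 : ∏ t ∈ Finset.range m, ((m:ℝ)-t) = (m.factorial : ℝ) := by
    have := fallP_mul_factorial (le_refl m)
    simp at this
    rw [← this, fallP]
  have hD2 : ∏ t ∈ Finset.range m, ((m:ℝ)-t+γ) = QP γ m := by
    rw [QP, ← Finset.prod_range_reflect (fun t => γ + 1 + (t:ℝ)) m]
    apply Finset.prod_congr rfl
    intro t ht
    rw [hcast t ht]
    ring
  have hQi : QP γ i = QP γ m * fallP ((i:ℝ)+γ) j := by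
    have h0 : QP γ i = ∏ t ∈ Finset.range (m+j), (γ+1+(t:ℝ)) := by
      rw [QP, show i = m + j by omega]
    rw [h0, Finset.prod_range_add]
    congr 1
    rw [fallP, ← Finset.prod_range_reflect (fun t => ((i:ℝ)+γ) - t) j]
    apply Finset.prod_congr rfl
    intro t ht
    have ht' : j - 1 - t + (t + 1) = j := by
      have := Finset.mem_range.mp ht; omega
    have hc : ((j - 1 - t : ℕ) : ℝ) = (j:ℝ) - 1 - t := by
      have := congrArg (fun k : ℕ => (k : ℝ)) ht'
      push_cast at this
      linarith
    simp only [hc]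
    push_cast [him]
    ring
  have hFi : fallP (i:ℝ) m = (i.choose j : ℝ) * (m.factorial : ℝ) := by
    have h1 := fallP_mul_factorial (show m ≤ i by omega)
    have h2 : i - m = j := by omega
    rw [h2] at h1
    have h3 := Nat.choose_mul_factorial_mul_factorial (le_of_lt hj)
    have h4 : ((i.choose j * j.factorial * (i-j).factorial : ℕ) : ℝ) = (i.factorial : ℝ) := by
      rw [h3]
    have h2' : i - j = m := hm.symm
    rw [h2'] at h4
    push_cast at h4
    have hjf : (j.factorial : ℝ) ≠ 0 := by positivity
    apply mul_right_cancel₀ hjf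
    rw [h1, ← h4]
    ring
  rw [hreindex, hsplit, hN1, hN2, hD1, hD2, hQi, hFi]
  have hmf : (m.factorial : ℝ) ≠ 0 := by positivity
  have hQm : QP γ m ≠ 0 := ne_of_gt (QP_pos hγ m)
  field_simp


/-- `κ(i,γ') = 1 + ∑_{j=0}^{i-1} ∏_{k=j}^{i-1} a_{ik}(γ')`. -/
noncomputable def kappa (i : ℕ) (γ : ℝ) : ℝ :=
  1 + ∑ j ∈ Finset.range i, ∏ k ∈ Finset.Icc j (i - 1), aCoef i k γ

theorem kappa_eq_gamma_ratio_and_pos (i : ℕ) (hi : 0 < i) (γ : ℝ) (hγ : 0 ≤ γ) :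
    kappa i γ = ((2 * i).factorial : ℝ) / (i.factorial : ℝ) *
      (Real.Gamma (γ + 1) / Real.Gamma ((i : ℝ) + γ + 1)) ∧
    0 < kappa i γ := by
  have hQ : 0 < QP γ i := QP_pos hγ i
  have hmul : kappa i γ * QP γ i = ((2*i).factorial : ℝ) / (i.factorial : ℝ) := by
    rw [kappa, add_mul, one_mul, Finset.sum_mul]
    have hterm : ∀ j ∈ range i, (∏ k ∈ Finset.Icc j (i-1), aCoef i k γ) * QP γ i
        = (i.choose j : ℝ) * fallP ((i:ℝ)+γ) j * fallP ((i:ℝ)-γ) (i-j) :=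
      fun j hj => prod_aCoef (Finset.mem_range.mp hj) hγ
    rw [Finset.sum_congr rfl hterm]
    have hv := vdm i ((i:ℝ)+γ) ((i:ℝ)-γ)
    rw [Finset.sum_range_succ] at hv
    have hxy : (i:ℝ)+γ + ((i:ℝ)-γ) = ((2*i:ℕ):ℝ) := by push_cast; ring
    rw [hxy] at hv
    have hlast : (i.choose i : ℝ) * fallP ((i:ℝ)+γ) i * fallP ((i:ℝ)-γ) (i-i) = QP γ i := by
      simp [fallP, QP_eq_fallP]
    rw [hlast] at hv
    have hfall : fallP ((2*i:ℕ):ℝ) i = ((2*i).factorial : ℝ) / (i.factorial : ℝ) := by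
      have h1 := fallP_mul_factorial (show i ≤ 2*i by omega)
      have h2 : 2*i - i = i := by omega
      rw [h2] at h1
      push_cast at h1 ⊢
      field_simp
      linarith [h1]
    rw [← hfall, ← hv]
    ring
  have hΓ : Real.Gamma ((i:ℝ) + γ + 1) = Real.Gamma (γ+1) * QP γ i := by
    rw [show (i:ℝ) + γ + 1 = γ + 1 + i by ring]
    exact Gamma_QP hγ i
  have hΓpos : 0 < Real.Gamma (γ + 1) := Real.Gamma_pos_of_pos (by linarith)
  have hk : kappa i γ = ((2*i).factorial : ℝ) / (i.factorial : ℝ) / QP γ i := by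
    field_simp at hmul ⊢
    linarith [hmul]
  constructor
  · rw [hk, hΓ]
    have hif : (i.factorial : ℝ) ≠ 0 := by positivity
    field_simp
  · rw [hk]
    have : (0:ℝ) < ((2*i).factorial : ℝ) := by positivity
    have : (0:ℝ) < (i.factorial : ℝ) := by positivity
    positivity
end

section
/- Let $i$ be a positive integer and $\gamma' \geq 0$ a real number. Then $\kappa(i,\gamma') = \sum_{j=0}^{i} \binom{i}{j} \dfrac{\prod_{k=0}^{i-j-1}(i-\gamma'-k)}{\prod_{k=0}^{i-j-1}(1+\gamma'+k)}$ (empty products being $1$). -/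
open Finset

lemma prod_cast_sub (i m : ℕ) (hm : m ≤ i) :
    ∏ t ∈ Finset.range m, ((i : ℝ) - (t : ℝ)) = (i.descFactorial m : ℝ) := by
  rw [Nat.descFactorial_eq_prod_range, Nat.cast_prod]
  refine Finset.prod_congr rfl fun t ht => ?_
  rw [Nat.cast_sub (le_of_lt (lt_of_lt_of_le (Finset.mem_range.mp ht) hm))]

lemma prod_add_one (m : ℕ) :
    ∏ t ∈ Finset.range m, ((t : ℝ) + 1) = (m.factorial : ℝ) := by
  rw [← Finset.prod_range_add_one_eq_factorial, Nat.cast_prod]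
  push_cast
  rfl

lemma key_prod (i j : ℕ) (hj : j < i) (γ : ℝ) (hγ : 0 ≤ γ) :
    ∏ k ∈ Finset.Icc j (i - 1), aCoef i k γ = (i.choose j : ℝ) *
      ((∏ k ∈ Finset.range (i - j), ((i : ℝ) - γ - (k : ℝ))) /
        ∏ k ∈ Finset.range (i - j), (1 + γ + (k : ℝ))) := by
  have h1 : ∏ k ∈ Finset.Icc j (i - 1), aCoef i k γ =
      ∏ t ∈ Finset.range (i - j),
        (((i : ℝ) - t) * ((i : ℝ) - γ - t)) / (((t : ℝ) + 1) * (1 + γ + t)) := by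
    refine Finset.prod_nbij' (fun k => i - 1 - k) (fun t => i - 1 - t) ?_ ?_ ?_ ?_ ?_
    · intro k hk
      simp only [Finset.mem_Icc] at hk
      simp only [Finset.mem_range]
      omega
    · intro t ht
      simp only [Finset.mem_range] at ht
      simp only [Finset.mem_Icc]
      omega
    · intro k hk
      simp only [Finset.mem_Icc] at hk
      show i - 1 - (i - 1 - k) = k
      omega
    · intro t ht
      simp only [Finset.mem_range] at ht
      show i - 1 - (i - 1 - t) = t
      omega
    · intro k hk
      simp only [Finset.mem_Icc] at hk
      unfold aCoef
      have h1 : ((i - 1 - k : ℕ) : ℝ) = (i : ℝ) - 1 - (k : ℝ) := by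
        rw [Nat.sub_sub, Nat.cast_sub (by omega : 1 + k ≤ i)]
        push_cast
        ring
      rw [h1]
      ring_nf
  rw [h1]
  have hden : ∀ t ∈ Finset.range (i - j), (((t : ℝ) + 1) * (1 + γ + t)) ≠ 0 := by
    intro t ht
    have h2 : (0:ℝ) < (t : ℝ) + 1 := by positivity
    have h3 : (0:ℝ) < 1 + γ + t := by positivity
    positivity
  rw [Finset.prod_div_distrib, Finset.prod_mul_distrib, Finset.prod_mul_distrib]
  have hm : i - j ≤ i := Nat.sub_le i j
  rw [prod_cast_sub i (i - j) hm, prod_add_one (i - j)]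
  have hdesc : (i.descFactorial (i - j) : ℝ) =
      ((i - j).factorial : ℝ) * (i.choose j : ℝ) := by
    rw [← Nat.cast_mul, ← Nat.choose_symm (le_of_lt hj),
      ← Nat.descFactorial_eq_factorial_mul_choose]
  rw [hdesc]
  have hfac : (((i - j).factorial : ℝ)) ≠ 0 := Nat.cast_ne_zero.mpr (Nat.factorial_ne_zero _)
  have hγprod : ∏ t ∈ Finset.range (i - j), (1 + γ + (t : ℝ)) ≠ 0 := by
    refine Finset.prod_ne_zero_iff.mpr fun t ht => ?_
    positivity
  field_simp

theorem kappa_eq_binomial_sum (i : ℕ) (hi : 0 < i) (γ : ℝ) (hγ : 0 ≤ γ) :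
    kappa i γ = ∑ j ∈ Finset.range (i + 1), (i.choose j : ℝ) *
      ((∏ k ∈ Finset.range (i - j), ((i : ℝ) - γ - (k : ℝ))) /
        ∏ k ∈ Finset.range (i - j), (1 + γ + (k : ℝ))) := by
  rw [Finset.sum_range_succ]
  simp only [Nat.sub_self, Finset.range_zero, Finset.prod_empty, Nat.choose_self,
    Nat.cast_one, one_mul, div_one]
  unfold kappa
  rw [add_comm]
  congr 1
  refine Finset.sum_congr rfl fun j hj => ?_
  exact key_prod i j (Finset.mem_range.mp hj) γ hγ
end

section
/- Let $\gamma' \geq 0$ be a real number, let $i \geq 1$ be an integer, let $s \in \mathbb{R}$ and let $d_0,\dots,d_{i-1} \in \mathbb{R}$. Then there exists a unique tuple $(C_0,\dots,C_i) \in \mathbb{R}^{i+1}$ satisfying $\sum_{j=0}^{i} C_j = s$ and, for all $0 \le j \le i-1$, $(j+1)(j+1-\gamma')\,C_{j+1} - (i-j)(i-j+\gamma')\,C_j = d_j$. -/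
open Finset Polynomial

/-!
The system is square, so it suffices that the homogeneous system has only the trivial solution.
With `a k = (k+1)(k+1-γ')` and `b k = (i-k)(i-k+γ')` the coefficients of `C (k+1)` and `C k`,
all `b k` (`k < i`) are positive since `γ' ≥ 0`, and telescoping the homogeneous recurrence gives
`C j * ∏_{k<i} b k = C i * P j` with `P j = ∏_{k<j} b k * ∏_{j≤k<i} a k`. Summing over `j`,
`C i * ∑ P = 0`. Now `∑ P = κ(i, γ') * ∏ b` and
`P j = i! * (i choose j) * (i+γ')^{↓j} * (i-γ')^{↓(i-j)}`, so by Chu–Vandermonde for falling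
factorials `∑ P = i! * (2i)^{↓i} = (2i)! ≠ 0`. Hence `C i = 0`, and then every `C j = 0`.
-/
theorem descPochhammer_eval_add {R : Type*} [CommRing R] (x y : R) (n : ℕ) :
    (descPochhammer R n).eval (x + y) = ∑ j ∈ range (n + 1),
      n.choose j * ((descPochhammer R j).eval x * (descPochhammer R (n - j)).eval y) := by
  have smeval_eq_eval (m : ℕ) (r : R) :
      (descPochhammer ℤ m).smeval r = (descPochhammer R m).eval r := by
    rw [← aeval_eq_smeval, aeval_def, ← eval_map, descPochhammer_map]
  simpa only [smeval_eq_eval, Nat.sum_antidiagonal_eq_sum_range_succ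
    (fun j k => (n.choose j : R) * ((descPochhammer R j).eval x * (descPochhammer R k).eval y))]
    using Ring.descPochhammer_smeval_add n (Commute.all x y)

theorem Nat.descFactorial_mul_descFactorial_sub {n j : ℕ} (hjn : j ≤ n) :
    n.descFactorial j * n.descFactorial (n - j) = n.factorial * n.choose j := by
  have h := Nat.factorial_mul_descFactorial (Nat.sub_le n j)
  rw [Nat.sub_sub_self hjn] at h
  rw [Nat.descFactorial_eq_factorial_mul_choose, mul_comm j.factorial, mul_assoc, h, mul_comm]

theorem mul_prod_Ico_eq_of_mul_succ_eq {M : Type*} [CommMonoid M] {a b x : ℕ → M} {j n : ℕ}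
    (hjn : j ≤ n) (h : ∀ k, j ≤ k → k < n → a k * x (k + 1) = b k * x k) :
    x j * ∏ k ∈ Ico j n, b k = x n * ∏ k ∈ Ico j n, a k := by
  induction n, hjn using Nat.le_induction with
  | base => simp
  | succ n hjn ih =>
    calc x j * ∏ k ∈ Ico j (n + 1), b k = (x j * ∏ k ∈ Ico j n, b k) * b n := by
          rw [prod_Ico_succ_top hjn, mul_assoc]
      _ = (b n * x n) * ∏ k ∈ Ico j n, a k := by
          rw [ih fun k hjk hkn => h k hjk (by omega), mul_comm (b n), mul_right_comm]
      _ = x (n + 1) * ∏ k ∈ Ico j (n + 1), a k := by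
          rw [← h n hjn n.lt_succ_self, prod_Ico_succ_top hjn, mul_comm (a n), mul_right_comm,
            mul_assoc]

theorem eq_zero_of_mul_succ_eq_of_sum_eq_zero {R : Type*} [CommRing R] [IsDomain R]
    {a b x : ℕ → R} {n : ℕ} (hrec : ∀ k < n, a k * x (k + 1) = b k * x k)
    (hsum : ∑ j ∈ range (n + 1), x j = 0) (hb : ∀ k < n, b k ≠ 0)
    (hκ : ∑ j ∈ range (n + 1), (∏ k ∈ range j, b k) * ∏ k ∈ Ico j n, a k ≠ 0) :
    ∀ j ≤ n, x j = 0 := by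
  have hB : ∏ k ∈ range n, b k ≠ 0 := prod_ne_zero_iff.2 fun k hk => hb k (mem_range.1 hk)
  have hscaled : ∀ j ≤ n,
      x j * ∏ k ∈ range n, b k = x n * ((∏ k ∈ range j, b k) * ∏ k ∈ Ico j n, a k) := by
    intro j hj
    calc x j * ∏ k ∈ range n, b k = (∏ k ∈ range j, b k) * (x j * ∏ k ∈ Ico j n, b k) := by
          rw [← prod_range_mul_prod_Ico b hj]; ring
      _ = _ := by rw [mul_prod_Ico_eq_of_mul_succ_eq hj fun k _ hk => hrec k hk]; ring
  have hxn : x n = 0 := by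
    have : x n * ∑ j ∈ range (n + 1), (∏ k ∈ range j, b k) * ∏ k ∈ Ico j n, a k = 0 := by
      rw [mul_sum, ← sum_congr rfl fun j hj => hscaled j (Nat.lt_succ_iff.1 (mem_range.1 hj)),
        ← sum_mul, hsum, zero_mul]
    exact (mul_eq_zero.1 this).resolve_right hκ
  intro j hj
  have := hscaled j hj
  rw [hxn, zero_mul] at this
  exact (mul_eq_zero.1 this).resolve_right hB

namespace KernelCoefficients

variable {R : Type*} [CommRing R]

def succCoeff (γ : R) (k : ℕ) : R := ((k : R) + 1) * ((k : R) + 1 - γ)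

def castSuccCoeff (γ : R) (i k : ℕ) : R := ((i : R) - k) * ((i : R) - k + γ)

theorem prod_range_castSuccCoeff (γ : R) (i j : ℕ) :
    ∏ k ∈ range j, castSuccCoeff γ i k =
      (descPochhammer R j).eval (i : R) * (descPochhammer R j).eval ((i : R) + γ) := by
  simp only [descPochhammer_eval_eq_prod_range, ← prod_mul_distrib, castSuccCoeff]
  exact prod_congr rfl fun k _ => by ring

theorem prod_Ico_succCoeff (γ : R) {i j : ℕ} (hji : j ≤ i) :
    ∏ k ∈ Ico j i, succCoeff γ k =
      (descPochhammer R (i - j)).eval (i : R) * (descPochhammer R (i - j)).eval ((i : R) - γ) := by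
  simp only [descPochhammer_eval_eq_prod_range, ← prod_mul_distrib, prod_Ico_eq_prod_range]
  rw [← prod_range_reflect]
  refine prod_congr rfl fun t ht => ?_
  obtain ⟨m, rfl⟩ : ∃ m, i = j + t + 1 + m := ⟨i - (j + t + 1), by grind⟩
  rw [show j + t + 1 + m - j - 1 - t = m by omega, succCoeff]
  push_cast
  ring

theorem sum_prod_castSuccCoeff_mul_prod_succCoeff (γ : R) (i : ℕ) :
    ∑ j ∈ range (i + 1), (∏ k ∈ range j, castSuccCoeff γ i k) * ∏ k ∈ Ico j i, succCoeff γ k =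
      (2 * i).factorial := by
  have hterm : ∀ j ∈ range (i + 1),
      (∏ k ∈ range j, castSuccCoeff γ i k) * ∏ k ∈ Ico j i, succCoeff γ k =
        i.factorial * (i.choose j * ((descPochhammer R j).eval ((i : R) + γ) *
          (descPochhammer R (i - j)).eval ((i : R) - γ))) := by
    intro j hj
    have hji : j ≤ i := Nat.lt_succ_iff.1 (mem_range.1 hj)
    rw [prod_range_castSuccCoeff, prod_Ico_succCoeff γ hji]
    simp only [descPochhammer_eval_eq_descFactorial]
    have hcast : (i.descFactorial j : R) * i.descFactorial (i - j) = i.factorial * i.choose j := by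
      rw [← Nat.cast_mul, ← Nat.cast_mul, Nat.descFactorial_mul_descFactorial_sub hji]
    linear_combination (descPochhammer R j).eval ((i : R) + γ) *
      (descPochhammer R (i - j)).eval ((i : R) - γ) * hcast
  rw [sum_congr rfl hterm, ← mul_sum, ← descPochhammer_eval_add,
    show (i : R) + γ + ((i : R) - γ) = ((2 * i : ℕ) : R) by push_cast; ring,
    descPochhammer_eval_eq_descFactorial, ← Nat.cast_mul]
  have h := Nat.factorial_mul_descFactorial (by omega : i ≤ 2 * i)
  rw [show 2 * i - i = i by omega] at h
  rw [h]

def kernelSystem (γ : R) (i : ℕ) : (Fin (i + 1) → R) →ₗ[R] R × (Fin i → R) where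
  toFun C := (∑ j, C j, fun j => succCoeff γ j * C j.succ - castSuccCoeff γ i j * C j.castSucc)
  map_add' C D := by
    ext j
    · simp only [Prod.fst_add, Pi.add_apply, sum_add_distrib]
    · simp only [Prod.snd_add, Pi.add_apply]
      ring
  map_smul' c C := by
    ext j
    · simp only [Prod.smul_fst, Pi.smul_apply, smul_eq_mul, mul_sum, RingHom.id_apply]
    · simp only [Prod.smul_snd, Pi.smul_apply, smul_eq_mul, RingHom.id_apply]
      ring

@[simp]
theorem kernelSystem_apply (γ : R) (i : ℕ) (C : Fin (i + 1) → R) :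
    kernelSystem γ i C =
      (∑ j, C j, fun j : Fin i => succCoeff γ j * C j.succ - castSuccCoeff γ i j * C j.castSucc) :=
  rfl

section LinearSystem

variable {K : Type*} [Field K] [LinearOrder K] [IsStrictOrderedRing K]

theorem castSuccCoeff_pos {γ : K} (hγ : 0 ≤ γ) {i k : ℕ} (hk : k < i) :
    0 < castSuccCoeff γ i k := by
  have hki : (k : K) + 1 ≤ i := by exact_mod_cast hk
  exact mul_pos (by linarith) (by linarith)

theorem kernelSystem_injective {γ : K} (hγ : 0 ≤ γ) (i : ℕ) :
    Function.Injective (kernelSystem γ i) := by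
  rw [← LinearMap.ker_eq_bot, LinearMap.ker_eq_bot']
  intro C hC
  simp only [kernelSystem_apply, Prod.ext_iff, funext_iff, Prod.fst_zero, Prod.snd_zero,
    Pi.zero_apply, sub_eq_zero] at hC
  obtain ⟨hCsum, hCrec⟩ := hC
  set x : ℕ → K := fun k => if h : k < i + 1 then C ⟨k, h⟩ else 0
  have hx (k : ℕ) (hk : k < i + 1) : x k = C ⟨k, hk⟩ := dif_pos hk
  have hrec : ∀ k < i, succCoeff γ k * x (k + 1) = castSuccCoeff γ i k * x k := by
    intro k hk
    rw [hx (k + 1) (by omega), hx k (by omega)]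
    exact hCrec ⟨k, hk⟩
  have hsum : ∑ j ∈ range (i + 1), x j = 0 := by
    rw [← Fin.sum_univ_eq_sum_range, ← hCsum]
    exact sum_congr rfl fun j _ => hx j j.isLt
  have hzero := eq_zero_of_mul_succ_eq_of_sum_eq_zero hrec hsum
    (fun k hk => (castSuccCoeff_pos hγ hk).ne')
    (by rw [sum_prod_castSuccCoeff_mul_prod_succCoeff]; exact_mod_cast (2 * i).factorial_ne_zero)
  funext j
  rw [← hx j j.isLt]
  exact hzero j (Nat.lt_succ_iff.1 j.isLt)

theorem kernelSystem_bijective {γ : K} (hγ : 0 ≤ γ) (i : ℕ) :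
    Function.Bijective (kernelSystem γ i) := by
  have hdim : Module.finrank K (Fin (i + 1) → K) = Module.finrank K (K × (Fin i → K)) := by
    simp [Module.finrank_prod, add_comm]
  have hinj := kernelSystem_injective hγ i
  exact ⟨hinj, (LinearMap.injective_iff_surjective_of_finrank_eq_finrank hdim).1 hinj⟩

end LinearSystem

end KernelCoefficients

theorem kernel_coefficient_system_unique_solvable_general
    (γ : ℝ) (hγ : 0 ≤ γ) (i : ℕ) (s : ℝ) (d : Fin i → ℝ) :
    ∃! C : Fin (i + 1) → ℝ,
      (∑ j, C j = s) ∧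
      ∀ j : Fin i,
        (((j : ℕ) : ℝ) + 1) * (((j : ℕ) : ℝ) + 1 - γ) * C j.succ -
          ((i : ℝ) - ((j : ℕ) : ℝ)) * ((i : ℝ) - ((j : ℕ) : ℝ) + γ) * C j.castSucc = d j := by
  simpa only [KernelCoefficients.kernelSystem_apply, Prod.ext_iff, funext_iff,
    KernelCoefficients.succCoeff, KernelCoefficients.castSuccCoeff] using
    (Function.bijective_iff_existsUnique _).1
      (KernelCoefficients.kernelSystem_bijective hγ i) (s, d)

theorem kernel_coefficient_system_unique_solvable
    (γ : ℝ) (hγ : 0 ≤ γ) (i : ℕ) (hi : 1 ≤ i) (s : ℝ) (d : Fin i → ℝ) :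
    ∃! C : Fin (i + 1) → ℝ,
      (∑ j, C j = s) ∧
      ∀ j : Fin i,
        (((j : ℕ) : ℝ) + 1) * (((j : ℕ) : ℝ) + 1 - γ) * C j.succ -
          ((i : ℝ) - ((j : ℕ) : ℝ)) * ((i : ℝ) - ((j : ℕ) : ℝ) + γ) * C j.castSucc = d j :=
  kernel_coefficient_system_unique_solvable_general γ hγ i s d
end

section
/- Let $i \geq 3$ be an odd integer and let $\gamma > i$ be a real number. Suppose $C_0, C_1, \dots, C_i$ are real numbers with $C_1 = C_{i-1} = 0$ and such that for every $0 \le j \le i-2$, $(j+2)(j+2-\gamma)\,C_{j+2} = (i-j)(i-j+\gamma)\,C_j$. Then $C_j = 0$ for all $0 \le j \le i$. -/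
theorem odd_degree_coefficients_vanish
    (i : ℕ) (hi : 3 ≤ i) (hodd : Odd i) (γ : ℝ) (hγ : (i : ℝ) < γ)
    (C : ℕ → ℝ) (h1 : C 1 = 0) (h2 : C (i - 1) = 0)
    (hrec : ∀ j : ℕ, j ≤ i - 2 →
      ((j : ℝ) + 2) * ((j : ℝ) + 2 - γ) * C (j + 2) =
        ((i : ℝ) - (j : ℝ)) * ((i : ℝ) - (j : ℝ) + γ) * C j) :
    ∀ j : ℕ, j ≤ i → C j = 0 := by
  have hi0 : (0:ℝ) ≤ (i:ℝ) := by positivity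
  -- odd indices vanish by forward recursion
  have hoddz : ∀ k : ℕ, 2*k+1 ≤ i → C (2*k+1) = 0 := by
    intro k
    induction k with
    | zero => intro _; simpa using h1
    | succ k ih =>
      intro hk
      have hk2 : 2*k+1 ≤ i - 2 := by omega
      have hrec' := hrec (2*k+1) hk2
      rw [ih (by omega), mul_zero] at hrec'
      have hle : ((2*k+1 : ℕ):ℝ) + 2 ≤ (i:ℝ) := by
        exact_mod_cast (by omega : 2*k+1+2 ≤ i)
      have ha : ((2*k+1 : ℕ):ℝ) + 2 ≠ 0 := by positivity
      have hb : ((2*k+1 : ℕ):ℝ) + 2 - γ ≠ 0 := by nlinarith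
      have hC : C (2*k+1+2) = 0 := by
        rcases mul_eq_zero.mp hrec' with h | h
        · rcases mul_eq_zero.mp h with h | h
          · exact absurd h ha
          · exact absurd h hb
        · exact h
      have : 2*(k+1)+1 = 2*k+1+2 := by ring
      rw [this]; exact hC
  -- even indices vanish by backward recursion from i-1
  have hevenz : ∀ k : ℕ, 2*k ≤ i - 1 → C (i - 1 - 2*k) = 0 := by
    intro k
    induction k with
    | zero => intro _; simpa using h2
    | succ k ih =>
      intro hk
      set j := i - 1 - 2*(k+1) with hj
      have hji : j ≤ i - 2 := by omega
      have hrec' := hrec j hji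
      have hj2 : j + 2 = i - 1 - 2*k := by omega
      rw [hj2, ih (by omega), mul_zero] at hrec'
      have hjle : (j:ℝ) + 3 ≤ (i:ℝ) := by exact_mod_cast (by omega : j + 3 ≤ i)
      have hγ0 : (0:ℝ) < γ := lt_of_le_of_lt hi0 hγ
      have ha : (i:ℝ) - (j:ℝ) ≠ 0 := by nlinarith
      have hb : (i:ℝ) - (j:ℝ) + γ ≠ 0 := by nlinarith
      rcases mul_eq_zero.mp hrec'.symm with h | h
      · rcases mul_eq_zero.mp h with h | h
        · exact absurd h ha
        · exact absurd h hb
      · exact h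
  intro j hj
  rcases Nat.even_or_odd j with he | ho
  · obtain ⟨m, hm⟩ := he
    obtain ⟨n, hn⟩ := hodd
    have hjne : j ≠ i := by omega
    have : j = i - 1 - 2*((i - 1 - j)/2) := by omega
    rw [this]
    exact hevenz _ (by omega)
  · obtain ⟨m, hm⟩ := ho
    rw [hm]
    exact hoddz m (by omega)
end

section
/- Let $R > 0$, $M > 0$, let $i_0$ be a nonnegative integer, and let $(g_i)$, $(h_i)$ be real sequences with $|g_i| \le M R^{-2i}$ and $|h_i| \le M R^{-2i}$ for all $i$. Let $(b_i)$, $(c_i)$ be nonnegative sequences which are nonincreasing for $i > i_0$ and such that $c_i \to 0$ as $i \to \infty$. Let $(a_i)$ be a nonnegative real sequence satisfying, for all $i > i_0$, $a_i \le b_i |g_i| + c_i \sum_{j=0}^{i-1} a_j |h_{i-1-j}|$. Then the power series $\sum_{i=0}^{\infty} a_i x^{2i}$ converges for every real $x$ with $|x| < R$. -/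
open Finset Filter

theorem comparison_lemma_power_series
    (R M : ℝ) (hR : 0 < R) (hM : 0 < M) (i0 : ℕ)
    (g h : ℕ → ℝ)
    (hg : ∀ i : ℕ, |g i| ≤ M / R ^ (2 * i))
    (hh : ∀ i : ℕ, |h i| ≤ M / R ^ (2 * i))
    (b c : ℕ → ℝ)
    (hb0 : ∀ i, 0 ≤ b i) (hc0 : ∀ i, 0 ≤ c i)
    (hbmono : ∀ i j : ℕ, i0 < i → i ≤ j → b j ≤ b i)
    (hcmono : ∀ i j : ℕ, i0 < i → i ≤ j → c j ≤ c i)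
    (hclim : Tendsto c atTop (nhds 0))
    (a : ℕ → ℝ) (ha0 : ∀ i, 0 ≤ a i)
    (hrec : ∀ i : ℕ, i0 < i →
      a i ≤ b i * |g i| + c i * ∑ j ∈ Finset.range i, a j * |h (i - 1 - j)|) :
    ∀ x : ℝ, |x| < R → Summable (fun i : ℕ => a i * x ^ (2 * i)) := by
  intro x hx
  set q : ℝ := x ^ 2 / R ^ 2 with hqdef
  have hR2 : (0:ℝ) < R ^ 2 := by positivity
  have hq0 : 0 ≤ q := by positivity
  have hq1 : q < 1 := by
    rw [hqdef, div_lt_one hR2]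
    nlinarith [abs_nonneg x, sq_abs x]
  set ε : ℝ := (1 - q) / (M * R ^ 2 * (1 + q)) with hεdef
  have h1q : (0:ℝ) < 1 + q := by linarith
  have hε : 0 < ε := div_pos (by linarith) (by positivity)
  set K : ℝ := 1 + M * R ^ 2 * ε with hKdef
  have hK0 : (0:ℝ) < K := by
    have := mul_pos (mul_pos hM hR2) hε
    rw [hKdef]; linarith
  have hMRε : M * R ^ 2 * ε = (1 - q) / (1 + q) := by
    rw [hεdef]; field_simp
  have hKq : K * q < 1 := by
    have key : K * q * (1 + q) = 2 * q := by
      rw [hKdef, hMRε]; field_simp; norm_num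
    nlinarith
  -- choose N
  obtain ⟨N0, hN0⟩ := eventually_atTop.mp (hclim.eventually_lt_const hε)
  set N : ℕ := max N0 (i0 + 1) with hNdef
  have hNi0 : i0 < N := lt_of_lt_of_le (Nat.lt_succ_self i0) (le_max_right _ _)
  have hNc : ∀ i, N ≤ i → c i < ε := fun i hi => hN0 i (le_trans (le_max_left _ _) hi)
  set S : ℕ → ℝ := fun n => ∑ j ∈ Finset.range n, a j * R ^ (2 * j) with hSdef
  have hS0 : ∀ n, 0 ≤ S n := by
    intro n
    apply Finset.sum_nonneg
    intro j _
    exact mul_nonneg (ha0 j) (by positivity)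
  -- key recursive bound
  have key : ∀ i, N ≤ i → a i * R ^ (2 * i) ≤ M * b N + M * R ^ 2 * ε * S i := by
    intro i hi
    have hi0 : i0 < i := lt_of_lt_of_le hNi0 hi
    have h1 := hrec i hi0
    have hRi : (0:ℝ) < R ^ (2 * i) := by positivity
    -- per-term bound on sum
    have hterm : ∀ j ∈ Finset.range i,
        R ^ (2 * i) * (a j * (M / R ^ (2 * (i - 1 - j)))) = M * R ^ 2 * (a j * R ^ (2 * j)) := by
      intro j hj
      simp only [Finset.mem_range] at hj
      have hsplit : R ^ (2 * i) = R ^ (2 * (i - 1 - j)) * (R ^ 2 * R ^ (2 * j)) := by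
        rw [← pow_add, ← pow_add]
        congr 1
        omega
      have hne : R ^ (2 * (i - 1 - j)) ≠ 0 := by positivity
      rw [hsplit]
      field_simp
    have hsum1 : ∑ j ∈ Finset.range i, a j * |h (i - 1 - j)|
        ≤ ∑ j ∈ Finset.range i, a j * (M / R ^ (2 * (i - 1 - j))) := by
      apply Finset.sum_le_sum
      intro j _
      exact mul_le_mul_of_nonneg_left (hh _) (ha0 j)
    have hsumnn : 0 ≤ ∑ j ∈ Finset.range i, a j * |h (i - 1 - j)| := by
      apply Finset.sum_nonneg
      intro j _
      exact mul_nonneg (ha0 j) (abs_nonneg _)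
    have inner : R ^ (2 * i) * ∑ j ∈ Finset.range i, a j * |h (i - 1 - j)|
        ≤ M * R ^ 2 * S i := by
      calc R ^ (2 * i) * ∑ j ∈ Finset.range i, a j * |h (i - 1 - j)|
          ≤ R ^ (2 * i) * ∑ j ∈ Finset.range i, a j * (M / R ^ (2 * (i - 1 - j))) :=
            mul_le_mul_of_nonneg_left hsum1 hRi.le
        _ = ∑ j ∈ Finset.range i, R ^ (2 * i) * (a j * (M / R ^ (2 * (i - 1 - j)))) :=
            Finset.mul_sum _ _ _
        _ = ∑ j ∈ Finset.range i, M * R ^ 2 * (a j * R ^ (2 * j)) :=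
            Finset.sum_congr rfl hterm
        _ = M * R ^ 2 * S i := (Finset.mul_sum _ _ _).symm
    have part1 : b i * |g i| * R ^ (2 * i) ≤ M * b N := by
      have hgi : |g i| * R ^ (2 * i) ≤ M := by
        have := hg i
        rw [le_div_iff₀ hRi] at this
        exact this
      have hbi : b i ≤ b N := hbmono N i hNi0 hi
      calc b i * |g i| * R ^ (2 * i) = b i * (|g i| * R ^ (2 * i)) := by ring
        _ ≤ b N * M := mul_le_mul hbi hgi (mul_nonneg (abs_nonneg _) hRi.le) (hb0 N)
        _ = M * b N := by ring
    have part2 : c i * (R ^ (2 * i) * ∑ j ∈ Finset.range i, a j * |h (i - 1 - j)|)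
        ≤ ε * (M * R ^ 2 * S i) := by
      apply mul_le_mul (hNc i hi).le inner (mul_nonneg hRi.le hsumnn) hε.le
    calc a i * R ^ (2 * i)
        ≤ (b i * |g i| + c i * ∑ j ∈ Finset.range i, a j * |h (i - 1 - j)|) * R ^ (2 * i) :=
          mul_le_mul_of_nonneg_right h1 hRi.le
      _ = b i * |g i| * R ^ (2 * i)
          + c i * (R ^ (2 * i) * ∑ j ∈ Finset.range i, a j * |h (i - 1 - j)|) := by ring
      _ ≤ M * b N + ε * (M * R ^ 2 * S i) := add_le_add part1 part2
      _ = M * b N + M * R ^ 2 * ε * S i := by ring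
  set D : ℝ := b N / (R ^ 2 * ε) with hDdef
  have hD0 : 0 ≤ D := div_nonneg (hb0 N) (by positivity)
  have hKD : M * R ^ 2 * ε * D = M * b N := by
    rw [hDdef]; field_simp
  -- geometric growth of partial sums
  have grow : ∀ n, N ≤ n → S n + D ≤ (S N + D) * K ^ (n - N) := by
    intro n hn
    induction n, hn using Nat.le_induction with
    | base => simp
    | succ n hn ih =>
      have e1 : S (n + 1) = S n + a n * R ^ (2 * n) := Finset.sum_range_succ _ n
      have hk := key n hn
      have step1 : S (n + 1) + D ≤ K * (S n + D) := by
        rw [e1, hKdef]; nlinarith [hKD]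
      calc S (n + 1) + D ≤ K * (S n + D) := step1
        _ ≤ K * ((S N + D) * K ^ (n - N)) := mul_le_mul_of_nonneg_left ih hK0.le
        _ = (S N + D) * K ^ (n + 1 - N) := by
            rw [show n + 1 - N = (n - N) + 1 from by omega, pow_succ]; ring
  have abound : ∀ n, N ≤ n → a n * R ^ (2 * n) ≤ (S N + D) * K ^ (n + 1 - N) := by
    intro n hn
    have hg1 := grow (n + 1) (by omega)
    have e1 : S (n + 1) = S n + a n * R ^ (2 * n) := Finset.sum_range_succ _ n
    have := hS0 n
    linarith
  -- compare with geometric series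
  rw [← summable_nat_add_iff N]
  have hRne : ∀ m : ℕ, (R : ℝ) ^ (2 * m) ≠ 0 := fun m => by positivity
  have eterm : ∀ m : ℕ, a m * x ^ (2 * m) = a m * R ^ (2 * m) * q ^ m := by
    intro m
    rw [hqdef, div_pow, pow_mul, pow_mul, ← pow_mul]
    field_simp
  set C0 : ℝ := (S N + D) * (K * q ^ N) with hC0def
  refine Summable.of_nonneg_of_le ?_ ?_
    (Summable.mul_left C0 (summable_geometric_of_lt_one (mul_nonneg hK0.le hq0) hKq))
  · intro n
    exact mul_nonneg (ha0 _) (by rw [pow_mul]; positivity)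
  · intro n
    rw [eterm (n + N)]
    calc a (n + N) * R ^ (2 * (n + N)) * q ^ (n + N)
        ≤ (S N + D) * K ^ (n + N + 1 - N) * q ^ (n + N) := by
          apply mul_le_mul_of_nonneg_right (abound (n + N) (by omega)) (by positivity)
      _ = C0 * (K * q) ^ n := by
          rw [show n + N + 1 - N = n + 1 from by omega, hC0def, pow_succ, pow_add, mul_pow]
          ring
end

section
/- Let $N$ be a nonnegative integer, set $\gamma' = N + \tfrac{1}{2}$, and let $i, j$ be integers with $N < j < i$. Define $L_{i0} = 1$ and, for $1 \le j \le i$, $L_{ij} = \binom{i}{j} \frac{\prod_{k=0}^{j-1}(i+\gamma'-k)}{\prod_{k=1}^{j}(k-\gamma')}$. Then $|L_{i(j+1)}| \le |L_{ij}|$ if and only if $2j \ge i - 1 + \gamma'$. -/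
/-! Consecutive coefficients differ by the factor `(i - j)(i + γ - j) / ((j + 1)(j + 1 - γ))`,
and for half-integer `γ` this ratio is positive once `j > γ`. Its numerator minus its
denominator factors as `(i + 1)(i - 1 + γ - 2j)`, which gives the threshold `2j = i - 1 + γ`. -/

open Finset

/-- The regularizing coefficients `L_{ij}` (odd-dimension case):
`L_{i0} = 1` and for `j ≥ 1`,
`L_{ij} = binom(i,j) ⬝ (∏_{k=0}^{j-1} (i+γ'-k)) / (∏_{k=1}^{j} (k-γ'))`.
(For `j = 0` both products are empty, yielding `1`.) -/
noncomputable def Lcoef (γ : ℝ) (i j : ℕ) : ℝ :=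
  (i.choose j : ℝ) * (∏ k ∈ Finset.range j, ((i : ℝ) + γ - (k : ℝ))) /
    ∏ k ∈ Finset.Icc 1 j, ((k : ℝ) - γ)

theorem cast_choose_succ_mul (i j : ℕ) :
    (i.choose (j + 1) : ℝ) * (j + 1) = i.choose j * (i - j) := by
  rcases le_or_gt j i with hji | hij
  · rw [← Nat.cast_sub hji]
    exact_mod_cast Nat.choose_succ_right_eq i j
  · simp [Nat.choose_eq_zero_of_lt hij, Nat.choose_eq_zero_of_lt (hij.trans j.lt_succ_self)]

-- Valid for every `γ`: when `γ = j + 1` both sides vanish since `x / 0 = 0`.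
theorem Lcoef_succ (γ : ℝ) (i j : ℕ) :
    Lcoef γ i (j + 1) =
      Lcoef γ i j * ((i - j) * (i + γ - j) / ((j + 1) * (j + 1 - γ))) := by
  have hchoose : (i.choose (j + 1) : ℝ) = i.choose j * (i - j) / (j + 1) := by
    rw [← cast_choose_succ_mul, mul_div_cancel_right₀ _ (by positivity)]
  unfold Lcoef
  rw [prod_range_succ, prod_Icc_succ_top (Nat.le_add_left 1 j), hchoose]
  push_cast
  simp only [div_eq_mul_inv, mul_inv]
  ring

theorem Lcoef_ne_zero {γ : ℝ} (hγ : -1 < γ) (hγ_nat : ∀ k : ℕ, (k : ℝ) ≠ γ) {i j : ℕ}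
    (hji : j ≤ i) : Lcoef γ i j ≠ 0 := by
  have hchoose : (i.choose j : ℝ) ≠ 0 := by exact_mod_cast (Nat.choose_pos hji).ne'
  have hnum : ∏ k ∈ range j, ((i : ℝ) + γ - k) ≠ 0 := by
    refine prod_ne_zero_iff.mpr fun k hk => ?_
    have : (k : ℝ) + 1 ≤ i := by exact_mod_cast (mem_range.mp hk).trans_le hji
    linarith
  have hden : ∏ k ∈ Icc 1 j, ((k : ℝ) - γ) ≠ 0 :=
    prod_ne_zero_iff.mpr fun k _ => sub_ne_zero.mpr (hγ_nat k)
  exact div_ne_zero (mul_ne_zero hchoose hnum) hden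

theorem natCast_ne_add_half (k N : ℕ) : (k : ℝ) ≠ N + 1 / 2 := by
  intro h
  have : ((2 * k : ℕ) : ℝ) = (2 * N + 1 : ℕ) := by push_cast; linarith
  have := Nat.cast_injective this
  omega

theorem abs_Lcoef_succ_le_iff
    (N : ℕ) (γ : ℝ) (hγ : γ = (N : ℝ) + 1 / 2) (i j : ℕ) (hNj : N < j) (hji : j < i) :
    |Lcoef γ i (j + 1)| ≤ |Lcoef γ i j| ↔ (i : ℝ) - 1 + γ ≤ 2 * (j : ℝ) := by
  have hN : (N : ℝ) + 1 ≤ j := by exact_mod_cast hNj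
  have hj : (j : ℝ) + 1 ≤ i := by exact_mod_cast hji
  have hγ_pos : 0 < γ := hγ ▸ by positivity
  have hL : 0 < |Lcoef γ i j| :=
    abs_pos.mpr (Lcoef_ne_zero (by linarith) (hγ ▸ natCast_ne_add_half · N) hji.le)
  have hnum : 0 < ((i : ℝ) - j) * (i + γ - j) := mul_pos (by linarith) (by linarith)
  have hden : 0 < ((j : ℝ) + 1) * (j + 1 - γ) := mul_pos (by linarith) (by linarith)
  have hgap : ((i : ℝ) - j) * (i + γ - j) - (j + 1) * (j + 1 - γ) =
      (i + 1) * (i - 1 + γ - 2 * j) := by ring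
  rw [Lcoef_succ, abs_mul, abs_of_pos (div_pos hnum hden), mul_le_iff_le_one_right hL,
    div_le_one hden, ← sub_nonpos, hgap, ← mul_zero ((i : ℝ) + 1),
    mul_le_mul_iff_right₀ (by positivity), sub_nonpos]
end

section
/- Let $N \geq 0$ be a fixed real number and define, for each positive integer $i$ with $i > N+1$, $f_2(i) = \dfrac{(i+\tfrac{1}{2}-N)(i+\tfrac{3}{2}+N)}{\sqrt{(i-1+N)(i+1-N)(i-N)(i+N+4)}}$. Then $\lim_{i \to \infty} f_2(i)^{\,i} = 1$. -/
open Filter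

/-- `f₂(i) = ((i+1/2-N)(i+3/2+N)) / √((i-1+N)(i+1-N)(i-N)(i+N+4))`. -/
noncomputable def fTwo (N : ℝ) (i : ℕ) : ℝ :=
  (((i : ℝ) + 1 / 2 - N) * ((i : ℝ) + 3 / 2 + N)) /
    Real.sqrt (((i : ℝ) - 1 + N) * ((i : ℝ) + 1 - N) * ((i : ℝ) - N) * ((i : ℝ) + N + 4))

/-! Write `f₂(i)² = 1 + g(i)`. The squared numerator and the radicand are monic quartics in `i` with
the same cubic coefficient, so `g(i) = O(1/i²)` and `i·g(i) → 0`. By `(1 + g n)^n → exp (lim n·g n)`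
this gives `(f₂(i)²)^i → 1`, and since `f₂(i) ≥ 0` for large `i`, `f₂(i)^i → 1`. -/

open Topology

theorem tendsto_pow_of_tendsto_mul_sq_sub_one {a : ℕ → ℝ} (ha : ∀ᶠ n in atTop, 0 ≤ a n)
    (h : Tendsto (fun n : ℕ => n * (a n ^ 2 - 1)) atTop (𝓝 0)) :
    Tendsto (fun n => a n ^ n) atTop (𝓝 1) := by
  have hsq : Tendsto (fun n => (a n ^ 2) ^ n) atTop (𝓝 1) := by
    simpa using Real.tendsto_one_add_pow_exp_of_tendsto h
  have hsqrt := (Real.continuous_sqrt.tendsto 1).comp hsq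
  rw [Real.sqrt_one] at hsqrt
  refine hsqrt.congr' ?_
  filter_upwards [ha] with n hn
  rw [Function.comp_apply, ← pow_mul, mul_comm, pow_mul, Real.sqrt_sq (pow_nonneg hn n)]

theorem fTwo_nonneg {N : ℝ} {i : ℕ} (hi : |N| + 1 < i) : 0 ≤ fTwo N i := by
  unfold fTwo
  exact div_nonneg (mul_nonneg (by linarith [le_abs_self N]) (by linarith [neg_abs_le N]))
    (Real.sqrt_nonneg _)

theorem natCast_mul_fTwo_sq_sub_one {N : ℝ} {i : ℕ} (hi : |N| + 1 < i) :
    (i : ℝ) * (fTwo N i ^ 2 - 1) =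
      (i : ℝ)⁻¹ * (13 / 2 + (7 - 12 * N) * (i : ℝ)⁻¹ +
          (13 / 2 * N ^ 2 - 11 / 2 * N + 9 / 16) * (i : ℝ)⁻¹ ^ 2) /
        ((1 - (1 - N) * (i : ℝ)⁻¹) * (1 + (1 - N) * (i : ℝ)⁻¹) * (1 - N * (i : ℝ)⁻¹) *
          (1 + (N + 4) * (i : ℝ)⁻¹)) := by
  have hB : 0 < ((i : ℝ) - 1 + N) * ((i : ℝ) + 1 - N) * ((i : ℝ) - N) * ((i : ℝ) + N + 4) := by
    apply_rules [mul_pos] <;> linarith [le_abs_self N, neg_abs_le N]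
  have hi0 : (i : ℝ) ≠ 0 := (by linarith [abs_nonneg N] : (0 : ℝ) < i).ne'
  -- The squared numerator minus the radicand is `13/2 i² + (7 - 12N) i + 13/2 N² - 11/2 N + 9/16`;
  -- divide it and the radicand by `i⁴`.
  have hq : (1 - (1 - N) * (i : ℝ)⁻¹) * (1 + (1 - N) * (i : ℝ)⁻¹) * (1 - N * (i : ℝ)⁻¹) *
      (1 + (N + 4) * (i : ℝ)⁻¹) =
      ((i : ℝ) - 1 + N) * ((i : ℝ) + 1 - N) * ((i : ℝ) - N) * ((i : ℝ) + N + 4) / (i : ℝ) ^ 4 := by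
    field_simp
    ring
  rw [hq, eq_div_iff (div_ne_zero hB.ne' (pow_ne_zero 4 hi0)), fTwo, div_pow, Real.sq_sqrt hB.le,
    div_sub_one hB.ne', mul_assoc, div_mul_div_cancel₀ hB.ne']
  field_simp
  ring

theorem tendsto_natCast_mul_fTwo_sq_sub_one (N : ℝ) :
    Tendsto (fun i : ℕ => (i : ℝ) * (fTwo N i ^ 2 - 1)) atTop (𝓝 0) := by
  have hcont : ContinuousAt (fun u : ℝ =>
      u * (13 / 2 + (7 - 12 * N) * u + (13 / 2 * N ^ 2 - 11 / 2 * N + 9 / 16) * u ^ 2) /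
        ((1 - (1 - N) * u) * (1 + (1 - N) * u) * (1 - N * u) * (1 + (N + 4) * u))) 0 := by
    fun_prop (disch := norm_num)
  have hlim := hcont.tendsto.comp (tendsto_inv_atTop_zero.comp tendsto_natCast_atTop_atTop)
  rw [zero_mul, zero_div] at hlim
  refine hlim.congr' ?_
  filter_upwards [tendsto_natCast_atTop_atTop.eventually_gt_atTop (|N| + 1)] with i hi
  exact (natCast_mul_fTwo_sq_sub_one hi).symm

theorem fTwo_pow_tendsto_one_general (N : ℝ) :
    Tendsto (fun i : ℕ => fTwo N i ^ i) atTop (nhds 1) := by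
  refine tendsto_pow_of_tendsto_mul_sq_sub_one ?_ (tendsto_natCast_mul_fTwo_sq_sub_one N)
  filter_upwards [tendsto_natCast_atTop_atTop.eventually_gt_atTop (|N| + 1)] with i hi
  exact fTwo_nonneg hi

theorem fTwo_pow_tendsto_one (N : ℝ) (hN : 0 ≤ N) :
    Tendsto (fun i : ℕ => fTwo N i ^ i) atTop (nhds 1) :=
  fTwo_pow_tendsto_one_general N
end

section
/- Let $N$ be a nonnegative integer, set $\gamma' = N + \tfrac{1}{2}$, let $\rho_0 > 1$ and $M > 0$, and let $(\lambda_i)_{i\ge 0}$ be a real sequence with $|\lambda_i| \le M \rho_0^{-2i}$ for all $i$. Let $(C_{ij})_{i \ge 0,\,0\le j \le i}$ be the unique family of real numbers satisfying, for every $i \ge 0$, $\sum_{j=0}^{i} C_{ij} = -\frac{\lambda_i}{2(2i+1)}$, and for every $i \ge 1$ and $0 \le j \le i-1$, $(j+1)(j+1-\gamma')\,C_{i(j+1)} - (i-j)(i-j+\gamma')\,C_{ij} = \sum_{k=j}^{i-1} C_{kj}\,\lambda_{i-1-k}$. Define $\alpha_i = \sum_{j=0}^{i} |C_{ij}|$.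 Then the power series $\sum_{i=0}^{\infty} \alpha_i x^{2i}$ converges for every real $x$ with $|x| < \rho_0$; consequently the double series $G(r,\rho) = \sum_{i=0}^{\infty} \sum_{j=0}^{i} C_{ij}\, r^{2j} \rho^{2(i-j)}$ converges absolutely for all $0 \le \rho \le r < \rho_0$. -/
open Finset


private lemma fact_up (N i j : ℕ) (γ : ℝ) (hγ : γ = (N:ℝ) + 1/2)
    (hi : 8*(N+1) ≤ i) (h1 : (i+N+1)/2 ≤ j) (h2 : j+1 ≤ i) :
    (((i:ℝ)-(N:ℝ)+1)/2)^2 ≤ ((j:ℝ)+1) * ((j:ℝ)+1-γ) ∧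
    ((i:ℝ)-(j:ℝ)) * ((i:ℝ)-(j:ℝ)+γ) ≤ ((j:ℝ)+1) * ((j:ℝ)+1-γ) ∧
    0 < ((i:ℝ)-(j:ℝ)) * ((i:ℝ)-(j:ℝ)+γ) := by
  have hni : 8*((N:ℝ)+1) ≤ (i:ℝ) := by exact_mod_cast hi
  have hn0 : (0:ℝ) ≤ (N:ℝ) := Nat.cast_nonneg N
  have hj2 : i+N ≤ 2*j := by omega
  have hjr : (i:ℝ) + (N:ℝ) ≤ 2*(j:ℝ) := by exact_mod_cast hj2
  have hji : (j:ℝ)+1 ≤ (i:ℝ) := by exact_mod_cast h2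
  have e1 : ((i:ℝ)-(N:ℝ)+1)/2 ≤ (j:ℝ)+1 := by linarith
  have e2 : ((i:ℝ)-(N:ℝ)+1)/2 ≤ (j:ℝ)+1-γ := by rw [hγ]; linarith
  have e0 : 0 < ((i:ℝ)-(N:ℝ)+1)/2 := by linarith
  refine ⟨by nlinarith, ?_, by apply mul_pos <;> linarith⟩
  have hp : (0:ℝ) ≤ ((i:ℝ)+1)*(2*(j:ℝ)+1-(i:ℝ)-γ) := by
    apply mul_nonneg
    · linarith
    · rw [hγ]; linarith
  nlinarith

private lemma fact_down (N i j : ℕ) (γ : ℝ) (hγ : γ = (N:ℝ) + 1/2)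
    (hi : 8*(N+1) ≤ i) (h1 : j < (i+N+1)/2) :
    (((i:ℝ)-(N:ℝ)+1)/2)^2 ≤ ((i:ℝ)-(j:ℝ)) * ((i:ℝ)-(j:ℝ)+γ) ∧
    ((j:ℝ)+1) * ((j:ℝ)+1-γ) ≤ ((i:ℝ)-(j:ℝ)) * ((i:ℝ)-(j:ℝ)+γ) ∧
    0 < ((i:ℝ)-(j:ℝ)) * ((i:ℝ)-(j:ℝ)+γ) := by
  have hni : 8*((N:ℝ)+1) ≤ (i:ℝ) := by exact_mod_cast hi
  have hn0 : (0:ℝ) ≤ (N:ℝ) := Nat.cast_nonneg N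
  have hγpos : 0 ≤ γ := by rw [hγ]; positivity
  have hj2 : 2*j + 1 ≤ i + N := by omega
  have hjr : 2*(j:ℝ) + 1 ≤ (i:ℝ) + (N:ℝ) := by exact_mod_cast hj2
  have hj0 : (0:ℝ) ≤ (j:ℝ) := Nat.cast_nonneg j
  have e1 : ((i:ℝ)-(N:ℝ)+1)/2 ≤ (i:ℝ)-(j:ℝ) := by linarith
  have e2 : ((i:ℝ)-(N:ℝ)+1)/2 ≤ (i:ℝ)-(j:ℝ)+γ := by linarith
  have e0 : 0 < ((i:ℝ)-(N:ℝ)+1)/2 := by linarith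
  refine ⟨by nlinarith, ?_, by apply mul_pos <;> linarith⟩
  have hp : (0:ℝ) ≤ ((i:ℝ)+1)*((i:ℝ)+γ-1-2*(j:ℝ)) := by
    apply mul_nonneg
    · linarith
    · rw [hγ]; linarith
  nlinarith

private lemma fact_qsmall (N j : ℕ) (γ : ℝ) (hγ : γ = (N:ℝ) + 1/2) (hj : j < N) :
    |((j:ℝ)+1) * ((j:ℝ)+1-γ)| ≤ ((N:ℝ)+1)^2 := by
  have hj0 : (0:ℝ) ≤ (j:ℝ) := Nat.cast_nonneg j
  have hn0 : (0:ℝ) ≤ (N:ℝ) := Nat.cast_nonneg N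
  have hjn : (j:ℝ)+1 ≤ (N:ℝ) := by exact_mod_cast hj
  rw [abs_le, hγ]
  constructor
  · nlinarith [sq_nonneg (2*((j:ℝ)+1) - ((N:ℝ)+1/2))]
  · nlinarith

private lemma fact_qpos (N j : ℕ) (γ : ℝ) (hγ : γ = (N:ℝ) + 1/2) (hj : N ≤ j) :
    0 ≤ ((j:ℝ)+1) * ((j:ℝ)+1-γ) := by
  have hjn : (N:ℝ) ≤ (j:ℝ) := by exact_mod_cast hj
  have hj0 : (0:ℝ) ≤ (j:ℝ) := Nat.cast_nonneg j
  rw [hγ]; nlinarith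

private lemma fact_num (N i : ℕ) (hi : 8*(N+1)^3 ≤ i) :
    (N:ℝ)*((N:ℝ)+1)^2 / ((((i:ℝ)-(N:ℝ)+1)/2)^2) ≤ 1/2 ∧
    ((N:ℝ)+1)^2 ≤ (((i:ℝ)-(N:ℝ)+1)/2)^2 ∧
    4*((i:ℝ)+1) / ((((i:ℝ)-(N:ℝ)+1)/2)^2) ≤ 57/(i:ℝ) := by
  have hN3 : N+1 ≤ (N+1)^3 := Nat.le_self_pow (by norm_num) _
  have hi8 : 8*(N+1) ≤ i := le_trans (Nat.mul_le_mul_left 8 hN3) hi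
  have hni : 8*((N:ℝ)+1) ≤ (i:ℝ) := by exact_mod_cast hi8
  have hni3 : 8*((N:ℝ)+1)^3 ≤ (i:ℝ) := by exact_mod_cast hi
  have hn0 : (0:ℝ) ≤ (N:ℝ) := Nat.cast_nonneg N
  have e0 : 0 < ((i:ℝ)-(N:ℝ)+1)/2 := by linarith
  have hn3r : (N:ℝ)+1 ≤ ((N:ℝ)+1)^3 := by exact_mod_cast hN3
  have hu1 : (1:ℝ) ≤ (N:ℝ)+1 := by linarith
  have h2 : 3*((N:ℝ)+1)^3 ≤ ((i:ℝ)-(N:ℝ)+1)/2 := by nlinarith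
  have h3 : (3*((N:ℝ)+1)^3)^2 ≤ (((i:ℝ)-(N:ℝ)+1)/2)^2 := by
    apply pow_le_pow_left₀ (by positivity) h2
  refine ⟨?_, by nlinarith, ?_⟩
  · rw [div_le_iff₀ (by positivity)]
    have h5 : (N:ℝ)*((N:ℝ)+1)^2 ≤ ((N:ℝ)+1)^5 := by
      nlinarith [mul_le_mul_of_nonneg_right (show (N:ℝ) ≤ ((N:ℝ)+1)^3 by linarith)
        (sq_nonneg ((N:ℝ)+1))]
    have h6 : ((N:ℝ)+1)^5 ≤ ((N:ℝ)+1)^6 := by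
      nlinarith [mul_le_mul_of_nonneg_right hu1 (show (0:ℝ) ≤ ((N:ℝ)+1)^5 by positivity)]
    nlinarith
  · rw [div_le_div_iff₀ (by positivity) (by linarith)]
    nlinarith

private noncomputable def upSeq (P Q T : ℕ → ℝ) (m : ℕ) (init : ℝ) : ℕ → ℝ
  | 0 => init
  | (k+1) => (P (m+k) * upSeq P Q T m init k + T (m+k)) / Q (m+k)

private noncomputable def downSeq (P Q T : ℕ → ℝ) (m : ℕ) (init : ℝ) : ℕ → ℝ
  | 0 => init
  | (k+1) => (Q (m-k-1) * downSeq P Q T m init k - T (m-k-1)) / P (m-k-1)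

section
variable (N i : ℕ) (γ : ℝ)

set_option maxHeartbeats 3000000 in
private lemma row_bound (hγ : γ = (N:ℝ) + 1/2)
    (hi : 8*(N+1)^3 ≤ i)
    (a T' : ℕ → ℝ) (S : ℝ)
    (hS : ∑ j ∈ Finset.range (i+1), a j = S)
    (hR : ∀ j : ℕ, j ≤ i - 1 →
      ((j:ℝ)+1) * ((j:ℝ)+1-γ) * a (j+1) - ((i:ℝ)-(j:ℝ)) * ((i:ℝ)-(j:ℝ)+γ) * a j = T' j) :
    ∑ j ∈ Finset.range (i+1), |a j| ≤ 3*|S| + (57/(i:ℝ)) * ∑ t ∈ Finset.range i, |T' t| := by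
  classical
  have hN3 : N+1 ≤ (N+1)^3 := Nat.le_self_pow (by norm_num) _
  have hi8 : 8*(N+1) ≤ i := le_trans (Nat.mul_le_mul_left 8 hN3) hi
  set Q : ℕ → ℝ := fun j => ((j:ℝ)+1) * ((j:ℝ)+1-γ) with hQdef
  set P : ℕ → ℝ := fun j => ((i:ℝ)-(j:ℝ)) * ((i:ℝ)-(j:ℝ)+γ) with hPdef
  set D : ℝ := (((i:ℝ)-(N:ℝ)+1)/2)^2 with hDdef
  set m : ℕ := (i+N+1)/2 with hmdef
  have hNm : N ≤ m := by omega
  have hmi : m+1 ≤ i := by omega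
  have hm1 : 1 ≤ m := by omega
  have hDpos : 0 < D := by
    have h1 : (0:ℝ) ≤ (N:ℝ) := Nat.cast_nonneg N
    have h2 : 8*((N:ℝ)+1) ≤ (i:ℝ) := by exact_mod_cast hi8
    have e0 : 0 < ((i:ℝ)-(N:ℝ)+1)/2 := by linarith
    rw [hDdef]; exact pow_pos e0 2
  have hup : ∀ j : ℕ, m ≤ j → j+1 ≤ i → D ≤ Q j ∧ P j ≤ Q j ∧ 0 < P j :=
    fun j h1 h2 => fact_up N i j γ hγ hi8 h1 h2
  have hdown : ∀ j : ℕ, j < m → D ≤ P j ∧ Q j ≤ P j ∧ 0 < P j :=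
    fun j h1 => fact_down N i j γ hγ hi8 h1
  have hqsm : ∀ j : ℕ, j < N → |Q j| ≤ ((N:ℝ)+1)^2 :=
    fun j h => fact_qsmall N j γ hγ h
  have hqpos : ∀ j : ℕ, N ≤ j → 0 ≤ Q j := fun j h => fact_qpos N j γ hγ h
  obtain ⟨hnum1, hnum2, hnum3⟩ := fact_num N i hi
  -- sequences
  set v : ℕ → ℝ := upSeq P Q (fun _ => 0) m 1 with hvdef
  set w : ℕ → ℝ := upSeq P Q T' m 0 with hwdef
  set u : ℕ → ℝ := downSeq P Q (fun _ => 0) m 1 with hudef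
  set z : ℕ → ℝ := downSeq P Q T' m 0 with hzdef
  set Ttot : ℝ := ∑ t ∈ Finset.range i, |T' t| with hTtot
  have hTnn : 0 ≤ Ttot := Finset.sum_nonneg fun _ _ => abs_nonneg _
  -- the recurrence in solved form
  have hRa : ∀ j : ℕ, j+1 ≤ i → Q j ≠ 0 → a (j+1) = (P j * a j + T' j) / Q j := by
    intro j hj hQne
    rw [eq_div_iff hQne]
    have h := hR j (by omega)
    simp only [hQdef, hPdef]
    linear_combination h
  have hRb : ∀ j : ℕ, j+1 ≤ i → P j ≠ 0 → a j = (Q j * a (j+1) - T' j) / P j := by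
    intro j hj hPne
    rw [eq_div_iff hPne]
    have h := hR j (by omega)
    simp only [hQdef, hPdef]
    linear_combination -h
  -- upward representation
  have hCA : ∀ k : ℕ, m+k ≤ i → a (m+k) = v k * a m + w k := by
    intro k
    induction k with
    | zero => intro _; simp [hvdef, hwdef, upSeq]
    | succ k ih =>
      intro hk
      have h1 := hup (m+k) (by omega) (by omega)
      have hQne : Q (m+k) ≠ 0 := ne_of_gt (lt_of_lt_of_le hDpos h1.1)
      have hstep := hRa (m+k) (by omega) hQne
      have e : m+(k+1) = (m+k)+1 := rfl
      rw [e, hstep, ih (by omega), hvdef, hwdef]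
      simp only [upSeq]
      rw [← hvdef, ← hwdef]
      field_simp
      ring
  have hCB : ∀ k : ℕ, k ≤ m → a (m-k) = u k * a m + z k := by
    intro k
    induction k with
    | zero => intro _; simp [hudef, hzdef, downSeq]
    | succ k ih =>
      intro hk
      have h1 := hdown (m-k-1) (by omega)
      have hPne : P (m-k-1) ≠ 0 := ne_of_gt h1.2.2
      have hstep := hRb (m-k-1) (by omega) hPne
      have e : m-(k+1) = m-k-1 := by omega
      have e2 : m-k-1+1 = m-k := by omega
      rw [e, hstep, e2, ih (by omega), hudef, hzdef]
      simp only [downSeq]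
      rw [← hudef, ← hzdef]
      field_simp
      ring
  -- bounds on the homogeneous and particular sequences
  have hv : ∀ k : ℕ, m+k ≤ i → 0 ≤ v k ∧ v k ≤ 1 := by
    intro k
    induction k with
    | zero => intro _; simp [hvdef, upSeq]
    | succ k ih =>
      intro hk
      obtain ⟨ih0, ih1⟩ := ih (by omega)
      have h1 := hup (m+k) (by omega) (by omega)
      have hQpos : 0 < Q (m+k) := lt_of_lt_of_le hDpos h1.1
      have hv1 : v (k+1) = (P (m+k) * v k + 0) / Q (m+k) := by
        simp only [hvdef, upSeq]
      rw [hv1]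
      constructor
      · apply div_nonneg _ (le_of_lt hQpos)
        have := le_of_lt h1.2.2
        nlinarith
      · rw [div_le_one hQpos]
        nlinarith [h1.2.1, h1.2.2]
  have hu1 : ∀ k : ℕ, k ≤ m → |u k| ≤ 1 := by
    intro k
    induction k with
    | zero => intro _; simp [hudef, downSeq]
    | succ k ih =>
      intro hk
      have ih1 := ih (by omega)
      have h1 := hdown (m-k-1) (by omega)
      have hPpos : 0 < P (m-k-1) := h1.2.2
      have hQle : |Q (m-k-1)| ≤ P (m-k-1) := by
        rw [abs_le]
        refine ⟨?_, h1.2.1⟩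
        rcases le_or_gt N (m-k-1) with hc | hc
        · linarith [hqpos _ hc]
        · have := hqsm _ hc
          have h2 : ((N:ℝ)+1)^2 ≤ D := hnum2
          have := abs_le.1 this
          linarith [h1.1]
      have hu2 : u (k+1) = (Q (m-k-1) * u k - 0) / P (m-k-1) := by
        simp only [hudef, downSeq]
      rw [hu2, sub_zero, abs_div, abs_mul, abs_of_pos hPpos]
      rw [div_le_one hPpos]
      calc |Q (m-k-1)| * |u k| ≤ P (m-k-1) * 1 := by
            apply mul_le_mul hQle ih1 (abs_nonneg _) (le_of_lt hPpos)
        _ = P (m-k-1) := mul_one _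
  have hu0 : ∀ k : ℕ, k ≤ m-N → 0 ≤ u k := by
    intro k
    induction k with
    | zero => intro _; simp [hudef, downSeq]
    | succ k ih =>
      intro hk
      have ih1 := ih (by omega)
      have h1 := hdown (m-k-1) (by omega)
      have hq := hqpos (m-k-1) (by omega)
      have hu2 : u (k+1) = (Q (m-k-1) * u k - 0) / P (m-k-1) := by
        simp only [hudef, downSeq]
      rw [hu2, sub_zero]
      exact div_nonneg (mul_nonneg hq ih1) (le_of_lt h1.2.2)
  have hw : ∀ k : ℕ, m+k ≤ i → |w k| ≤ (∑ t ∈ Finset.Ico m (m+k), |T' t|)/D := by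
    intro k
    induction k with
    | zero => intro _; simp [hwdef, upSeq]
    | succ k ih =>
      intro hk
      have ih1 := ih (by omega)
      have h1 := hup (m+k) (by omega) (by omega)
      have hQpos : 0 < Q (m+k) := lt_of_lt_of_le hDpos h1.1
      have hw1 : w (k+1) = (P (m+k) * w k + T' (m+k)) / Q (m+k) := by
        simp only [hwdef, upSeq]
      rw [hw1, show m+(k+1) = (m+k)+1 from rfl,
        Finset.sum_Ico_succ_top (by omega : m ≤ m+k)]
      have hb1 : |(P (m+k) * w k + T' (m+k)) / Q (m+k)|
          ≤ (P (m+k) * |w k| + |T' (m+k)|) / Q (m+k) := by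
        rw [abs_div, abs_of_pos hQpos]
        gcongr
        calc |P (m+k) * w k + T' (m+k)| ≤ |P (m+k) * w k| + |T' (m+k)| := abs_add_le _ _
          _ = P (m+k) * |w k| + |T' (m+k)| := by rw [abs_mul, abs_of_pos h1.2.2]
      refine le_trans hb1 ?_
      have hb2 : (P (m+k) * |w k| + |T' (m+k)|) / Q (m+k)
          ≤ |w k| + |T' (m+k)|/D := by
        rw [div_le_iff₀ hQpos]
        have e3 : |T' (m+k)|/D * Q (m+k) ≥ |T' (m+k)| := by
          rw [ge_iff_le, div_mul_eq_mul_div, le_div_iff₀ hDpos]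
          have := abs_nonneg (T' (m+k))
          nlinarith [h1.1]
        nlinarith [h1.2.1, abs_nonneg (w k), mul_le_mul_of_nonneg_left h1.2.1 (abs_nonneg (w k))]
      refine le_trans hb2 ?_
      rw [add_div]
      linarith [ih1]
  have hz : ∀ k : ℕ, k ≤ m → |z k| ≤ (∑ t ∈ Finset.Ico (m-k) m, |T' t|)/D := by
    intro k
    induction k with
    | zero => intro _; simp [hzdef, downSeq]
    | succ k ih =>
      intro hk
      have ih1 := ih (by omega)
      have h1 := hdown (m-k-1) (by omega)
      have hPpos : 0 < P (m-k-1) := h1.2.2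
      have hQle : |Q (m-k-1)| ≤ P (m-k-1) := by
        rw [abs_le]
        refine ⟨?_, h1.2.1⟩
        rcases le_or_gt N (m-k-1) with hc | hc
        · linarith [hqpos _ hc]
        · have h3 := hqsm _ hc
          have h2 : ((N:ℝ)+1)^2 ≤ D := hnum2
          have := abs_le.1 h3
          linarith [h1.1]
      have hz1 : z (k+1) = (Q (m-k-1) * z k - T' (m-k-1)) / P (m-k-1) := by
        simp only [hzdef, downSeq]
      have e : ∑ t ∈ Finset.Ico (m-(k+1)) m, |T' t|
          = |T' (m-k-1)| + ∑ t ∈ Finset.Ico (m-k) m, |T' t| := by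
        have e1 : m-(k+1) = m-k-1 := by omega
        have e2 : m-k = (m-k-1)+1 := by omega
        rw [e1, e2, Finset.sum_eq_sum_Ico_succ_bot (by omega) (fun t => |T' t|)]
        simp
      rw [hz1, e]
      have hb1 : |(Q (m-k-1) * z k - T' (m-k-1)) / P (m-k-1)|
          ≤ (P (m-k-1) * |z k| + |T' (m-k-1)|) / P (m-k-1) := by
        rw [abs_div, abs_of_pos hPpos]
        gcongr
        calc |Q (m-k-1) * z k - T' (m-k-1)| ≤ |Q (m-k-1) * z k| + |T' (m-k-1)| := abs_sub _ _
          _ ≤ P (m-k-1) * |z k| + |T' (m-k-1)| := by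
              rw [abs_mul]
              have := mul_le_mul_of_nonneg_right hQle (abs_nonneg (z k))
              linarith
      refine le_trans hb1 ?_
      have hb2 : (P (m-k-1) * |z k| + |T' (m-k-1)|) / P (m-k-1)
          ≤ |z k| + |T' (m-k-1)|/D := by
        rw [div_le_iff₀ hPpos]
        have e3 : |T' (m-k-1)|/D * P (m-k-1) ≥ |T' (m-k-1)| := by
          rw [ge_iff_le, div_mul_eq_mul_div, le_div_iff₀ hDpos]
          have := abs_nonneg (T' (m-k-1))
          nlinarith [h1.1]
        nlinarith [abs_nonneg (z k)]
      refine le_trans hb2 ?_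
      rw [add_div]
      linarith [ih1]
  set ch : ℕ → ℝ := fun j => if m ≤ j then v (j-m) else u (m-j) with hchdef
  set dd : ℕ → ℝ := fun j => if m ≤ j then w (j-m) else z (m-j) with hdddef
  have hkey : ∀ j, j ≤ i → a j = ch j * a m + dd j := by
    intro j hj
    rcases le_or_gt m j with hc | hc
    · have h := hCA (j-m) (by omega)
      rw [show m+(j-m) = j from by omega] at h
      simp only [hchdef, hdddef, if_pos hc]
      exact h
    · have h := hCB (m-j) (by omega)
      rw [show m-(m-j) = j from by omega] at h
      simp only [hchdef, hdddef, if_neg (not_le.2 hc)]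
      exact h
  have hchabs : ∀ j, j ≤ i → |ch j| ≤ 1 := by
    intro j hj
    rcases le_or_gt m j with hc | hc
    · simp only [hchdef, if_pos hc]
      have h := hv (j-m) (by omega)
      rw [abs_of_nonneg h.1]; exact h.2
    · simp only [hchdef, if_neg (not_le.2 hc)]
      exact hu1 (m-j) (by omega)
  have hchpos : ∀ j, N ≤ j → j ≤ i → 0 ≤ ch j := by
    intro j hj1 hj2
    rcases le_or_gt m j with hc | hc
    · simp only [hchdef, if_pos hc]; exact (hv (j-m) (by omega)).1
    · simp only [hchdef, if_neg (not_le.2 hc)]; exact hu0 (m-j) (by omega)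
  have hchm : ch m = 1 := by
    simp only [hchdef, if_pos le_rfl, Nat.sub_self, hvdef, upSeq]
  have hchsm : ∀ j, j < N → |ch j| ≤ ((N:ℝ)+1)^2/D := by
    intro j hj
    have hjm : j < m := by omega
    have e1 : m - j = (m-j-1)+1 := by omega
    have hu2 : u ((m-j-1)+1) = (Q (m-(m-j-1)-1) * u (m-j-1) - 0) / P (m-(m-j-1)-1) := by
      simp only [hudef, downSeq]
    have e2 : m-(m-j-1)-1 = j := by omega
    rw [e2] at hu2
    have h1 := hdown j hjm
    have h2 := hqsm j hj
    have h3 := hu1 (m-j-1) (by omega)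
    simp only [hchdef, if_neg (not_le.2 hjm)]
    rw [e1, hu2, sub_zero, abs_div, abs_mul, abs_of_pos h1.2.2]
    apply div_le_div₀ (by positivity) ?_ hDpos h1.1
    nlinarith [abs_nonneg (Q j), abs_nonneg (u (m-j-1))]
  have hsub : ∀ (s : Finset ℕ), s ⊆ Finset.range i →
      (∑ t ∈ s, |T' t|) / D ≤ Ttot/D := by
    intro s hs
    apply div_le_div₀ hTnn ?_ hDpos le_rfl
    rw [hTtot]
    exact Finset.sum_le_sum_of_subset_of_nonneg hs fun t _ _ => abs_nonneg _
  have hddb : ∀ j, j ≤ i → |dd j| ≤ Ttot/D := by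
    intro j hj
    rcases le_or_gt m j with hc | hc
    · simp only [hdddef, if_pos hc]
      refine le_trans (hw (j-m) (by omega)) (hsub _ ?_)
      intro t ht
      simp only [Finset.mem_Ico, Finset.mem_range] at *
      omega
    · simp only [hdddef, if_neg (not_le.2 hc)]
      refine le_trans (hz (m-j) (by omega)) (hsub _ ?_)
      intro t ht
      simp only [Finset.mem_Ico, Finset.mem_range] at *
      omega
  set G : ℝ := ∑ j ∈ Finset.range (i+1), ch j with hGdef
  set DD : ℝ := ∑ j ∈ Finset.range (i+1), |dd j| with hDDdef
  have hsmallsum : ∑ j ∈ Finset.range N, |ch j| ≤ 1/2 := by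
    calc ∑ j ∈ Finset.range N, |ch j| ≤ ∑ _j ∈ Finset.range N, ((N:ℝ)+1)^2/D :=
          Finset.sum_le_sum fun j hj => hchsm j (Finset.mem_range.1 hj)
      _ = (N:ℝ)*(((N:ℝ)+1)^2/D) := by
          rw [Finset.sum_const, Finset.card_range, nsmul_eq_mul]
      _ ≤ 1/2 := by rw [hDdef, ← mul_div_assoc]; exact hnum1
  have hsplitG : G = ∑ j ∈ Finset.range N, ch j + ∑ j ∈ Finset.Ico N (i+1), ch j := by
    have e := Finset.sum_Ico_consecutive ch (Nat.zero_le N) (show N ≤ i+1 by omega)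
    simp only [← Finset.range_eq_Ico] at e
    rw [hGdef]; exact e.symm
  have hG : 1/2 ≤ G := by
    have h2 : 1 ≤ ∑ j ∈ Finset.Ico N (i+1), ch j := by
      have h3 : ch m ≤ ∑ j ∈ Finset.Ico N (i+1), ch j := by
        apply Finset.single_le_sum (f := ch)
        · intro j hj
          have := Finset.mem_Ico.1 hj
          exact hchpos j this.1 (by omega)
        · exact Finset.mem_Ico.2 ⟨hNm, by omega⟩
      rw [hchm] at h3; exact h3
    have h3 : -(1/2) ≤ ∑ j ∈ Finset.range N, ch j := by
      have h4 : |∑ j ∈ Finset.range N, ch j| ≤ 1/2 :=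
        le_trans (Finset.abs_sum_le_sum_abs _ _) hsmallsum
      linarith [(abs_le.1 h4).1]
    linarith [hsplitG]
  have hGpos : 0 < G := lt_of_lt_of_le (by norm_num) hG
  have habs : ∑ j ∈ Finset.range (i+1), |ch j| ≤ 3*G := by
    have hsplit2 : ∑ j ∈ Finset.range (i+1), |ch j|
        = ∑ j ∈ Finset.range N, |ch j| + ∑ j ∈ Finset.Ico N (i+1), |ch j| := by
      have e := Finset.sum_Ico_consecutive (fun j => |ch j|) (Nat.zero_le N)
        (show N ≤ i+1 by omega)
      simp only [← Finset.range_eq_Ico] at e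
      exact e.symm
    have heq : ∑ j ∈ Finset.Ico N (i+1), |ch j| = ∑ j ∈ Finset.Ico N (i+1), ch j := by
      apply Finset.sum_congr rfl
      intro j hj
      have := Finset.mem_Ico.1 hj
      exact abs_of_nonneg (hchpos j this.1 (by omega))
    have h5 : ∑ j ∈ Finset.Ico N (i+1), ch j = G - ∑ j ∈ Finset.range N, ch j := by
      linarith [hsplitG]
    have h6 : -(1/2) ≤ ∑ j ∈ Finset.range N, ch j := by
      have h4 : |∑ j ∈ Finset.range N, ch j| ≤ 1/2 :=
        le_trans (Finset.abs_sum_le_sum_abs _ _) hsmallsum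
      linarith [(abs_le.1 h4).1]
    rw [hsplit2, heq, h5]
    linarith [hsmallsum]
  have hsum2 : S = G * a m + ∑ j ∈ Finset.range (i+1), dd j := by
    rw [← hS]
    calc ∑ j ∈ Finset.range (i+1), a j
        = ∑ j ∈ Finset.range (i+1), (ch j * a m + dd j) := by
          apply Finset.sum_congr rfl
          intro j hj
          exact hkey j (by have := Finset.mem_range.1 hj; omega)
      _ = G * a m + ∑ j ∈ Finset.range (i+1), dd j := by
          rw [Finset.sum_add_distrib, ← Finset.sum_mul, hGdef]
  have hDDnn : 0 ≤ DD := Finset.sum_nonneg fun _ _ => abs_nonneg _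
  have ham : |a m| ≤ (|S| + DD)/G := by
    have h4 : G * a m = S - ∑ j ∈ Finset.range (i+1), dd j := by linarith [hsum2]
    have h5 : |G * a m| ≤ |S| + DD := by
      rw [h4]
      calc |S - ∑ j ∈ Finset.range (i+1), dd j|
          ≤ |S| + |∑ j ∈ Finset.range (i+1), dd j| := abs_sub _ _
        _ ≤ |S| + DD := by
            have := Finset.abs_sum_le_sum_abs (fun j => dd j) (Finset.range (i+1))
            rw [hDDdef]; linarith
    rw [abs_mul, abs_of_pos hGpos] at h5
    rw [le_div_iff₀ hGpos]
    linarith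
  have hDDb : DD ≤ ((i:ℝ)+1) * (Ttot/D) := by
    calc DD ≤ ∑ _j ∈ Finset.range (i+1), Ttot/D := by
          rw [hDDdef]
          exact Finset.sum_le_sum fun j hj => hddb j (by have := Finset.mem_range.1 hj; omega)
      _ = ((i:ℝ)+1) * (Ttot/D) := by
          rw [Finset.sum_const, Finset.card_range, nsmul_eq_mul]
          push_cast; ring
  calc ∑ j ∈ Finset.range (i+1), |a j|
      ≤ ∑ j ∈ Finset.range (i+1), (|ch j| * |a m| + |dd j|) := by
        apply Finset.sum_le_sum
        intro j hj
        rw [hkey j (by have := Finset.mem_range.1 hj; omega)]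
        calc |ch j * a m + dd j| ≤ |ch j * a m| + |dd j| := abs_add_le _ _
          _ = |ch j| * |a m| + |dd j| := by rw [abs_mul]
    _ = (∑ j ∈ Finset.range (i+1), |ch j|) * |a m| + DD := by
        rw [Finset.sum_add_distrib, ← Finset.sum_mul, hDDdef]
    _ ≤ 3*G * |a m| + DD := by
        have := mul_le_mul_of_nonneg_right habs (abs_nonneg (a m))
        linarith
    _ ≤ 3*G * ((|S| + DD)/G) + DD := by
        have h7 : (0:ℝ) ≤ 3*G := by linarith
        have := mul_le_mul_of_nonneg_left ham h7
        linarith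
    _ = 3*|S| + 4*DD := by field_simp; ring
    _ ≤ 3*|S| + 4*(((i:ℝ)+1) * (Ttot/D)) := by linarith
    _ ≤ 3*|S| + (57/(i:ℝ)) * Ttot := by
        have h6 : 4*((i:ℝ)+1)/D ≤ 57/(i:ℝ) := by rw [hDdef]; exact hnum3
        have h8 : 4*(((i:ℝ)+1) * (Ttot/D)) = (4*((i:ℝ)+1)/D)*Ttot := by ring
        have h9 := mul_le_mul_of_nonneg_right h6 hTnn
        linarith
end

private lemma swap_bound (i : ℕ) (f : ℕ → ℕ → ℝ) :
    ∑ t ∈ Finset.range i, |∑ k ∈ Finset.Icc t (i-1), f k t| ≤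
      ∑ k ∈ Finset.range i, ∑ t ∈ Finset.range (k+1), |f k t| := by
  calc ∑ t ∈ Finset.range i, |∑ k ∈ Finset.Icc t (i-1), f k t|
      ≤ ∑ t ∈ Finset.range i, ∑ k ∈ Finset.Icc t (i-1), |f k t| :=
        Finset.sum_le_sum (fun t _ => Finset.abs_sum_le_sum_abs _ _)
    _ = ∑ t ∈ Finset.range i, ∑ k ∈ Finset.range i, if t ≤ k then |f k t| else 0 := by
        refine Finset.sum_congr rfl (fun t ht => ?_)
        rw [← Finset.sum_filter]
        apply Finset.sum_congr ?_ (fun _ _ => rfl)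
        ext k
        simp only [Finset.mem_Icc, Finset.mem_filter, Finset.mem_range] at *
        omega
    _ = ∑ k ∈ Finset.range i, ∑ t ∈ Finset.range i, if t ≤ k then |f k t| else 0 :=
        Finset.sum_comm
    _ ≤ ∑ k ∈ Finset.range i, ∑ t ∈ Finset.range (k+1), |f k t| := by
        refine Finset.sum_le_sum (fun k hk => ?_)
        rw [← Finset.sum_filter]
        apply le_of_eq
        apply Finset.sum_congr ?_ (fun _ _ => rfl)
        ext t
        simp only [Finset.mem_filter, Finset.mem_range] at *
        omega

set_option maxHeartbeats 1000000 in
theorem kernel_series_converges_odd_dimension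
    (N : ℕ) (γ : ℝ) (hγ : γ = (N : ℝ) + 1 / 2)
    (ρ0 M : ℝ) (hρ0 : 1 < ρ0) (hM : 0 < M)
    (lam : ℕ → ℝ) (hlam : ∀ i : ℕ, |lam i| ≤ M / ρ0 ^ (2 * i))
    (C : ℕ → ℕ → ℝ)
    (hsum : ∀ i : ℕ, ∑ j ∈ Finset.range (i + 1), C i j = -lam i / (2 * (2 * (i : ℝ) + 1)))
    (hrec : ∀ i : ℕ, 1 ≤ i → ∀ j : ℕ, j ≤ i - 1 →
      ((j : ℝ) + 1) * ((j : ℝ) + 1 - γ) * C i (j + 1) -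
          ((i : ℝ) - (j : ℝ)) * ((i : ℝ) - (j : ℝ) + γ) * C i j =
        ∑ k ∈ Finset.Icc j (i - 1), C k j * lam (i - 1 - k)) :
    (∀ x : ℝ, |x| < ρ0 →
      Summable (fun i : ℕ => (∑ j ∈ Finset.range (i + 1), |C i j|) * x ^ (2 * i))) ∧
    ∀ r ρ : ℝ, 0 ≤ ρ → ρ ≤ r → r < ρ0 →
      Summable (fun p : (i : ℕ) × Fin (i + 1) =>
        |C p.1 (p.2 : ℕ) * r ^ (2 * (p.2 : ℕ)) * ρ ^ (2 * (p.1 - (p.2 : ℕ)))|) := by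
  classical
  set α : ℕ → ℝ := fun k => ∑ j ∈ Finset.range (k+1), |C k j| with hα
  have hαnn : ∀ k, 0 ≤ α k := fun k => Finset.sum_nonneg fun _ _ => abs_nonneg _
  have hρ0pos : 0 < ρ0 := lt_trans one_pos hρ0
  have main : ∀ x : ℝ, |x| < ρ0 →
      Summable (fun i : ℕ => α i * x ^ (2 * i)) := by
    intro x hx
    set ρ1 : ℝ := (max |x| 1 + ρ0)/2 with hρ1def
    have hρ1a : 1 < ρ1 := by
      have := le_max_right |x| 1
      rw [hρ1def]; rcases max_cases |x| 1 with ⟨h,_⟩|⟨h,_⟩ <;> rw [h] <;> linarith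
    have hρ1b : ρ1 < ρ0 := by
      have h1 : max |x| 1 < ρ0 := max_lt hx hρ0
      rw [hρ1def]; linarith
    have hρ1x : |x| < ρ1 := by
      have := le_max_left |x| 1
      have h1 : max |x| 1 < ρ0 := max_lt hx hρ0
      rw [hρ1def]; linarith
    have hρ1pos : 0 < ρ1 := lt_trans one_pos hρ1a
    set θ : ℝ := ρ1^2/ρ0^2 with hθdef
    have hθpos : 0 < θ := by positivity
    have hθlt : θ < 1 := by
      rw [hθdef, div_lt_one (by positivity)]
      exact pow_lt_pow_left₀ hρ1b (le_of_lt hρ1pos) (by norm_num)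
    set c : ℝ := 57*M*ρ1^2/(1-θ) with hcdef
    have h1θ : 0 < 1-θ := by linarith
    have hcpos : 0 < c := by rw [hcdef]; exact div_pos (by positivity) h1θ
    set i2 : ℕ := max (8*(N+1)^3) (Nat.ceil (2*c)) with hi2def
    set K : ℝ := 6*M + 1 + ∑ k ∈ Finset.range i2, α k * ρ1^(2*k) with hKdef
    have hKsum : ∀ k, 0 ≤ α k * ρ1^(2*k) := fun k => mul_nonneg (hαnn k) (by positivity)
    have hK6M : 6*M ≤ K := by
      rw [hKdef]
      have := Finset.sum_nonneg (fun k (_ : k ∈ Finset.range i2) => hKsum k)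
      linarith
    have hKpos : 0 < K := by linarith
    -- the key induction
    have hβ : ∀ i : ℕ, α i * ρ1^(2*i) ≤ K := by
      intro i
      induction i using Nat.strong_induction_on with
      | _ i ih =>
        rcases lt_or_ge i i2 with hcase | hcase
        · rw [hKdef]
          have h1 : α i * ρ1^(2*i) ≤ ∑ k ∈ Finset.range i2, α k * ρ1^(2*k) :=
            Finset.single_le_sum (fun k _ => hKsum k) (Finset.mem_range.2 hcase)
          linarith
        · -- big i : use row_bound
          have hi1 : 8*(N+1)^3 ≤ i := le_trans (le_max_left _ _) hcase
          have hi0 : 1 ≤ i := by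
            have h9 : 0 < 8*(N+1)^3 := by positivity
            omega
          have hipos : (0:ℝ) < (i:ℝ) := by exact_mod_cast hi0
          have hrow := row_bound N i γ hγ hi1 (C i)
            (fun t => ∑ k ∈ Finset.Icc t (i-1), C k t * lam (i-1-k))
            (-lam i / (2 * (2 * (i : ℝ) + 1)))
            (hsum i) (fun j hj => hrec i hi0 j hj)
          -- bound the source total
          have hswap := swap_bound i (fun k t => C k t * lam (i-1-k))
          have hΦ : ∀ k : ℕ, ∑ t ∈ Finset.range (k+1), |C k t * lam (i-1-k)|
              = α k * |lam (i-1-k)| := by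
            intro k
            calc ∑ t ∈ Finset.range (k+1), |C k t * lam (i-1-k)|
                = ∑ t ∈ Finset.range (k+1), |C k t| * |lam (i-1-k)| :=
                  Finset.sum_congr rfl fun t _ => abs_mul _ _
              _ = α k * |lam (i-1-k)| := by rw [← Finset.sum_mul]
          have hT1 : ∑ t ∈ Finset.range i, |∑ k ∈ Finset.Icc t (i-1), C k t * lam (i-1-k)|
              ≤ ∑ k ∈ Finset.range i, α k * |lam (i-1-k)| :=
            le_trans hswap (le_of_eq (Finset.sum_congr rfl fun k _ => hΦ k))
          have hS1 : |(-lam i / (2 * (2 * (i:ℝ) + 1)))| ≤ M / ρ0^(2*i) := by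
            rw [abs_div, abs_neg, abs_of_pos (show (0:ℝ) < 2*(2*(i:ℝ)+1) by positivity)]
            calc |lam i| / (2*(2*(i:ℝ)+1)) ≤ |lam i| :=
                  div_le_self (abs_nonneg _) (by linarith)
              _ ≤ M / ρ0^(2*i) := hlam i
          have hterm : ∀ k, k < i →
              α k * |lam (i-1-k)| * ρ1^(2*i) ≤ K*M*ρ1^2*θ^(i-1-k) := by
            intro k hk
            have h1 : α k * ρ1^(2*k) ≤ K := ih k hk
            have h2 : |lam (i-1-k)| ≤ M / ρ0^(2*(i-1-k)) := hlam _
            have hexp : 2*i = 2*k + 2 + 2*(i-1-k) := by omega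
            have hpow : ρ1^(2*i) = ρ1^(2*k) * ρ1^2 * ρ1^(2*(i-1-k)) := by
              rw [hexp, pow_add, pow_add]
            have hθt : θ^(i-1-k) = ρ1^(2*(i-1-k)) / ρ0^(2*(i-1-k)) := by
              rw [hθdef, div_pow, ← pow_mul, ← pow_mul]
            calc α k * |lam (i-1-k)| * ρ1^(2*i)
                = (α k * ρ1^(2*k)) * (|lam (i-1-k)| * ρ1^(2*(i-1-k))) * ρ1^2 := by
                  rw [hpow]; ring
              _ ≤ K * ((M / ρ0^(2*(i-1-k))) * ρ1^(2*(i-1-k))) * ρ1^2 := by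
                  apply mul_le_mul_of_nonneg_right ?_ (by positivity)
                  apply mul_le_mul h1 (mul_le_mul_of_nonneg_right h2 (by positivity))
                    (by positivity) (le_of_lt hKpos)
              _ = K*M*ρ1^2*θ^(i-1-k) := by rw [hθt]; ring
          have hgeom : ∑ k ∈ Finset.range i, θ^(i-1-k) ≤ 1/(1-θ) := by
            have h1 : ∑ k ∈ Finset.range i, θ^(i-1-k) = ∑ k ∈ Finset.range i, θ^k :=
              Finset.sum_range_reflect (fun k => θ^k) i
            rw [h1, geom_sum_eq (ne_of_lt hθlt)]
            have h2 : (θ^i-1)/(θ-1) = (1-θ^i)/(1-θ) := by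
              rw [div_eq_div_iff (by linarith) (by linarith)]; ring
            rw [h2]
            apply div_le_div₀ one_pos.le ?_ h1θ le_rfl
            have := pow_nonneg (le_of_lt hθpos) i
            linarith
          have hΨρ : (∑ t ∈ Finset.range i,
                |∑ k ∈ Finset.Icc t (i-1), C k t * lam (i-1-k)|) * ρ1^(2*i)
              ≤ K*M*ρ1^2 * (1/(1-θ)) := by
            calc (∑ t ∈ Finset.range i,
                  |∑ k ∈ Finset.Icc t (i-1), C k t * lam (i-1-k)|) * ρ1^(2*i)
                ≤ (∑ k ∈ Finset.range i, α k * |lam (i-1-k)|) * ρ1^(2*i) :=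
                  mul_le_mul_of_nonneg_right hT1 (by positivity)
              _ = ∑ k ∈ Finset.range i, α k * |lam (i-1-k)| * ρ1^(2*i) :=
                  Finset.sum_mul _ _ _
              _ ≤ ∑ k ∈ Finset.range i, K*M*ρ1^2*θ^(i-1-k) :=
                  Finset.sum_le_sum fun k hk => hterm k (Finset.mem_range.1 hk)
              _ = K*M*ρ1^2 * ∑ k ∈ Finset.range i, θ^(i-1-k) := by
                  rw [Finset.mul_sum]
              _ ≤ K*M*ρ1^2 * (1/(1-θ)) := by
                  apply mul_le_mul_of_nonneg_left hgeom (by positivity)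
          -- put it together
          have hmul := mul_le_mul_of_nonneg_right hrow
            (show (0:ℝ) ≤ ρ1^(2*i) by positivity)
          have hterm1 : 3*|(-lam i / (2 * (2 * (i:ℝ) + 1)))| * ρ1^(2*i) ≤ 3*M := by
            have h3 : |(-lam i / (2 * (2 * (i:ℝ) + 1)))| * ρ1^(2*i)
                ≤ (M / ρ0^(2*i)) * ρ1^(2*i) :=
              mul_le_mul_of_nonneg_right hS1 (by positivity)
            have h4 : (M / ρ0^(2*i)) * ρ1^(2*i) = M * θ^i := by
              rw [show θ^i = ρ1^(2*i)/ρ0^(2*i) from by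
                rw [hθdef, div_pow, ← pow_mul, ← pow_mul]]
              ring
            have h5 : θ^i ≤ 1 := pow_le_one₀ (le_of_lt hθpos) (le_of_lt hθlt)
            nlinarith [abs_nonneg (-lam i / (2 * (2 * (i:ℝ) + 1)))]
          have h2c : 2*c ≤ (i:ℝ) := by
            have h6 : (Nat.ceil (2*c) : ℝ) ≤ (i:ℝ) := by
              exact_mod_cast le_trans (le_max_right _ _) hcase
            exact le_trans (Nat.le_ceil _) h6
          have hterm2 : (57/(i:ℝ)) * ((∑ t ∈ Finset.range i,
                |∑ k ∈ Finset.Icc t (i-1), C k t * lam (i-1-k)|) * ρ1^(2*i)) ≤ K/2 := by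
            have h7 : (57/(i:ℝ)) * (K*M*ρ1^2 * (1/(1-θ))) = c*K/(i:ℝ) := by
              rw [hcdef]; field_simp
            have h8 : (57/(i:ℝ)) * ((∑ t ∈ Finset.range i,
                  |∑ k ∈ Finset.Icc t (i-1), C k t * lam (i-1-k)|) * ρ1^(2*i))
                ≤ c*K/(i:ℝ) := by
              rw [← h7]
              apply mul_le_mul_of_nonneg_left hΨρ (by positivity)
            refine le_trans h8 ?_
            rw [div_le_iff₀ hipos]
            nlinarith [hKpos]
          calc α i * ρ1^(2*i)
              ≤ (3*|(-lam i / (2 * (2 * (i:ℝ) + 1)))| + (57/(i:ℝ)) * ∑ t ∈ Finset.range i,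
                  |∑ k ∈ Finset.Icc t (i-1), C k t * lam (i-1-k)|) * ρ1^(2*i) := hmul
            _ = 3*|(-lam i / (2 * (2 * (i:ℝ) + 1)))| * ρ1^(2*i)
                + (57/(i:ℝ)) * ((∑ t ∈ Finset.range i,
                  |∑ k ∈ Finset.Icc t (i-1), C k t * lam (i-1-k)|) * ρ1^(2*i)) := by ring
            _ ≤ 3*M + K/2 := add_le_add hterm1 hterm2
            _ ≤ K := by linarith
    -- conclude summability
    have hsummand : ∀ i : ℕ, α i * x^(2*i) ≤ K * (x^2/ρ1^2)^i := by
      intro i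
      have h1 : α i ≤ K / ρ1^(2*i) := by
        rw [le_div_iff₀ (by positivity)]
        exact hβ i
      calc α i * x^(2*i) ≤ (K / ρ1^(2*i)) * x^(2*i) := by
            apply mul_le_mul_of_nonneg_right h1
            rw [pow_mul]; positivity
        _ = K * (x^2/ρ1^2)^i := by
            rw [show (x^2/ρ1^2)^i = x^(2*i)/ρ1^(2*i) from by
              rw [div_pow, ← pow_mul, ← pow_mul]]
            ring
    apply Summable.of_nonneg_of_le
      (fun i => mul_nonneg (hαnn i) (by rw [pow_mul]; positivity)) hsummand
    apply Summable.mul_left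
    apply summable_geometric_of_lt_one (by positivity)
    rw [div_lt_one (by positivity)]
    calc x^2 = |x|^2 := (sq_abs x).symm
      _ < ρ1^2 := by exact pow_lt_pow_left₀ hρ1x (abs_nonneg x) (by norm_num)
  refine ⟨main, ?_⟩
  intro r ρ hρ hρr hr
  have hr0 : 0 ≤ r := le_trans hρ hρr
  have hmr := main r (by rwa [abs_of_nonneg hr0])
  apply (summable_sigma_of_nonneg (fun p => abs_nonneg _)).2
  constructor
  · intro i
    exact (hasSum_fintype _).summable
  · apply Summable.of_nonneg_of_le (fun i => tsum_nonneg fun j => abs_nonneg _) ?_ hmr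
    intro i
    rw [tsum_fintype]
    calc ∑ j : Fin (i+1), |C i (j:ℕ) * r^(2*(j:ℕ)) * ρ^(2*(i-(j:ℕ)))|
        ≤ ∑ j : Fin (i+1), |C i (j:ℕ)| * r^(2*i) := by
          apply Finset.sum_le_sum
          intro j _
          have hj : (j:ℕ) ≤ i := by omega
          rw [abs_mul, abs_mul, abs_pow, abs_pow, abs_of_nonneg hr0, abs_of_nonneg hρ]
          have h1 : ρ^(2*(i-(j:ℕ))) ≤ r^(2*(i-(j:ℕ))) := pow_le_pow_left₀ hρ hρr _
          have h2 : r^(2*(j:ℕ)) * r^(2*(i-(j:ℕ))) = r^(2*i) := by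
            rw [← pow_add]
            congr 1
            omega
          calc |C i (j:ℕ)| * r^(2*(j:ℕ)) * ρ^(2*(i-(j:ℕ)))
              ≤ |C i (j:ℕ)| * r^(2*(j:ℕ)) * r^(2*(i-(j:ℕ))) := by
                apply mul_le_mul_of_nonneg_left h1 (by positivity)
            _ = |C i (j:ℕ)| * r^(2*i) := by rw [mul_assoc, h2]
      _ = (∑ j ∈ Finset.range (i+1), |C i j|) * r^(2*i) := by
          rw [← Finset.sum_mul, Fin.sum_univ_eq_sum_range (fun j => |C i j|)]
end
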